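/- arXiv:math/0610736 — 9 statements merged into one kernel-verified Lean document; each statement's English description precedes it below -/
import Mathlib

section
/- Let μ = (μ₁,…,μ_m) and λ = (λ₁,…,λ_n) be probability vectors, C a convex subset of a real vector space, x₁,…,xₙ ∈ C, φ : C → ℝ convex, and ω a weight function with respect to μ and λ. Then φ(∑_{j=1}^n λⱼxⱼ) ≤ ∑_{i=1}^m μᵢ φ(∑_{j=1}^n ω(i,j)λⱼxⱼ) ≤ ∑_{j=1}^n λⱼφ(xⱼ). -/
open Finset

/-- Refinement of discrete Jensen's inequality via a weight function. -/
theorem jensen_refinement_weight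
    {E : Type*} [AddCommGroup E] [Module ℝ E]
    {m n : ℕ} (μ : Fin m → ℝ) (lam : Fin n → ℝ)
    (hμ0 : ∀ i, 0 ≤ μ i) (hμ1 : ∑ i, μ i = 1)
    (hlam0 : ∀ j, 0 ≤ lam j) (hlam1 : ∑ j, lam j = 1)
    (C : Set E) (x : Fin n → E) (hx : ∀ j, x j ∈ C)
    (φ : E → ℝ) (hφ : ConvexOn ℝ C φ)
    (ω : Fin m → Fin n → ℝ) (hω0 : ∀ i j, 0 ≤ ω i j)
    (hωμ : ∀ j, ∑ i, ω i j * μ i = 1)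
    (hωlam : ∀ i, ∑ j, ω i j * lam j = 1) :
    φ (∑ j, lam j • x j) ≤ ∑ i, μ i * φ (∑ j, (ω i j * lam j) • x j) ∧
      ∑ i, μ i * φ (∑ j, (ω i j * lam j) • x j) ≤ ∑ j, lam j * φ (x j) := by
  set y : Fin m → E := fun i => ∑ j, (ω i j * lam j) • x j with hy
  have hyC : ∀ i, y i ∈ C := fun i =>
    hφ.1.sum_mem (fun j _ => mul_nonneg (hω0 i j) (hlam0 j)) (hωlam i) (fun j _ => hx j)
  constructor
  · have h1 : ∑ j, lam j • x j = ∑ i, μ i • y i := by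
      simp only [hy, Finset.smul_sum]
      rw [Finset.sum_comm]
      refine Finset.sum_congr rfl fun j _ => ?_
      simp only [smul_smul]
      rw [← Finset.sum_smul]
      congr 1
      have : ∑ i, μ i * (ω i j * lam j) = (∑ i, ω i j * μ i) * lam j := by
        rw [Finset.sum_mul]; exact Finset.sum_congr rfl fun i _ => by ring
      rw [this, hωμ j, one_mul]
    rw [h1]
    exact hφ.map_sum_le (fun i _ => hμ0 i) hμ1 (fun i _ => hyC i)
  · have h2 : ∀ i, φ (y i) ≤ ∑ j, (ω i j * lam j) * φ (x j) := fun i =>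
      hφ.map_sum_le (fun j _ => mul_nonneg (hω0 i j) (hlam0 j)) (hωlam i) (fun j _ => hx j)
    calc ∑ i, μ i * φ (y i) ≤ ∑ i, μ i * ∑ j, (ω i j * lam j) * φ (x j) :=
          Finset.sum_le_sum fun i _ => mul_le_mul_of_nonneg_left (h2 i) (hμ0 i)
      _ = ∑ j, lam j * φ (x j) := by
          simp only [Finset.mul_sum]
          rw [Finset.sum_comm]
          refine Finset.sum_congr rfl fun j _ => ?_
          have : ∑ i, μ i * (ω i j * lam j * φ (x j)) = (∑ i, ω i j * μ i) * (lam j * φ (x j)) := by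
            rw [Finset.sum_mul]; exact Finset.sum_congr rfl fun i _ => by ring
          rw [this, hωμ j, one_mul]
end

section
/- Let μ = (μ₁,…,μ_m) and λ = (λ₁,…,λ_n) be probability vectors, C a convex subset of a real vector space, x₁,…,xₙ ∈ C, φ : C → ℝ convex, and ω₁, ω₂ two weight functions with respect to μ and λ. Then for every t ∈ [0,1], φ(∑_{j=1}^n λⱼxⱼ) ≤ φ_{ω₁,ω₂}(t) ≤ ∑_{j=1}^n λⱼφ(xⱼ), where φ_{ω₁,ω₂}(t) = ∑_{i=1}^m μᵢ φ(∑_{j=1}^n [(1−t)ω₁(i,j)+tω₂(i,j)]λⱼxⱼ). -/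
open Finset

/-- Refinement of discrete Jensen's inequality via two weight functions:
for every `t ∈ [0,1]`, `φ(∑ λⱼ xⱼ) ≤ φ_{ω₁,ω₂}(t) ≤ ∑ λⱼ φ(xⱼ)`. -/
theorem jensen_refinement_two_weights
    {E : Type*} [AddCommGroup E] [Module ℝ E]
    {m n : ℕ} (μ : Fin m → ℝ) (lam : Fin n → ℝ)
    (hμ0 : ∀ i, 0 ≤ μ i) (hμ1 : ∑ i, μ i = 1)
    (hlam0 : ∀ j, 0 ≤ lam j) (hlam1 : ∑ j, lam j = 1)
    (C : Set E) (x : Fin n → E) (hx : ∀ j, x j ∈ C)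
    (φ : E → ℝ) (hφ : ConvexOn ℝ C φ)
    (ω₁ ω₂ : Fin m → Fin n → ℝ)
    (hω₁0 : ∀ i j, 0 ≤ ω₁ i j) (hω₁μ : ∀ j, ∑ i, ω₁ i j * μ i = 1)
    (hω₁lam : ∀ i, ∑ j, ω₁ i j * lam j = 1)
    (hω₂0 : ∀ i j, 0 ≤ ω₂ i j) (hω₂μ : ∀ j, ∑ i, ω₂ i j * μ i = 1)
    (hω₂lam : ∀ i, ∑ j, ω₂ i j * lam j = 1)
    (t : ℝ) (ht : t ∈ Set.Icc (0 : ℝ) 1) :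
    φ (∑ j, lam j • x j) ≤
        ∑ i, μ i * φ (∑ j, (((1 - t) * ω₁ i j + t * ω₂ i j) * lam j) • x j) ∧
      ∑ i, μ i * φ (∑ j, (((1 - t) * ω₁ i j + t * ω₂ i j) * lam j) • x j) ≤
        ∑ j, lam j * φ (x j) := by
  obtain ⟨ht0, ht1⟩ := ht
  set ω : Fin m → Fin n → ℝ := fun i j => (1 - t) * ω₁ i j + t * ω₂ i j with hωdef
  have hω0 : ∀ i j, 0 ≤ ω i j := fun i j =>
    add_nonneg (mul_nonneg (by linarith) (hω₁0 i j)) (mul_nonneg ht0 (hω₂0 i j))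
  have hωlam : ∀ i, ∑ j, ω i j * lam j = 1 := by
    intro i
    simp only [hωdef, add_mul, mul_assoc]
    rw [Finset.sum_add_distrib, ← Finset.mul_sum, ← Finset.mul_sum, hω₁lam, hω₂lam]
    ring
  have hωμ : ∀ j, ∑ i, ω i j * μ i = 1 := by
    intro j
    simp only [hωdef, add_mul, mul_assoc]
    rw [Finset.sum_add_distrib, ← Finset.mul_sum, ← Finset.mul_sum, hω₁μ, hω₂μ]
    ring
  have hmem : ∀ i, ∑ j, (ω i j * lam j) • x j ∈ C := fun i =>
    hφ.1.sum_mem (fun j _ => mul_nonneg (hω0 i j) (hlam0 j)) (hωlam i) (fun j _ => hx j)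
  have jensen : ∀ i, φ (∑ j, (ω i j * lam j) • x j) ≤ ∑ j, (ω i j * lam j) * φ (x j) :=
    fun i => hφ.map_sum_le (fun j _ => mul_nonneg (hω0 i j) (hlam0 j)) (hωlam i)
      (fun j _ => hx j)
  constructor
  · have key : ∑ j, lam j • x j = ∑ i, μ i • ∑ j, (ω i j * lam j) • x j := by
      simp_rw [Finset.smul_sum, smul_smul]
      rw [Finset.sum_comm]
      refine Finset.sum_congr rfl fun j _ => ?_
      rw [← Finset.sum_smul]
      congr 1
      have h : ∑ i, μ i * (ω i j * lam j) = (∑ i, ω i j * μ i) * lam j := by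
        rw [Finset.sum_mul]
        exact Finset.sum_congr rfl fun i _ => by ring
      rw [h, hωμ j, one_mul]
    rw [key]
    exact hφ.map_sum_le (fun i _ => hμ0 i) hμ1 (fun i _ => hmem i)
  · calc ∑ i, μ i * φ (∑ j, (ω i j * lam j) • x j)
        ≤ ∑ i, μ i * ∑ j, (ω i j * lam j) * φ (x j) :=
          Finset.sum_le_sum fun i _ => mul_le_mul_of_nonneg_left (jensen i) (hμ0 i)
      _ = ∑ j, lam j * φ (x j) := by
          simp_rw [Finset.mul_sum]
          rw [Finset.sum_comm]
          refine Finset.sum_congr rfl fun j _ => ?_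
          have h : ∑ i, μ i * ((ω i j * lam j) * φ (x j))
              = (∑ i, ω i j * μ i) * (lam j * φ (x j)) := by
            rw [Finset.sum_mul]
            exact Finset.sum_congr rfl fun i _ => by ring
          rw [h, hωμ j, one_mul]
end

section
/- Let μ = (μ₁,…,μ_m) and λ = (λ₁,…,λ_n) be probability vectors, C a convex subset of a real vector space, x₁,…,xₙ ∈ C, φ : C → ℝ convex, and ω₁, ω₂ two weight functions with respect to μ and λ. Then φ(∑_{j=1}^n λⱼxⱼ) ≤ ∫₀¹ φ_{ω₁,ω₂}(t) dt ≤ ∑_{j=1}^n λⱼφ(xⱼ), where φ_{ω₁,ω₂}(t) = ∑_{i=1}^m μᵢ φ(∑_{j=1}^n [(1−t)ω₁(i,j)+tω₂(i,j)]λⱼxⱼ). (The function φ_{ω₁,ω₂} is bounded and convex on [0,1], hence Riemann integrable there.) -/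
/-!
For each `t ∈ [0, 1]` the weights `(1 - t) ω₁ + t ω₂` form again a weight function, and for any
weight function `ω` the points `yᵢ = ∑ⱼ ω(i,j) λⱼ xⱼ` lie in `C`, have `μ`-mean `∑ⱼ λⱼ xⱼ`, and
satisfy `∑ᵢ μᵢ φ(yᵢ) ≤ ∑ⱼ λⱼ φ(xⱼ)` by Jensen's inequality applied row by row. Hence the integrand
lies between the two bounds at every `t`. It is moreover convex in `t`, since `yᵢ` depends affinely
on `ω`, and a convex function on a compact interval is bounded and continuous on the interior,
hence integrable.
-/

open Finset MeasureTheory Set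

theorem ConvexOn.intervalIntegrable {f : ℝ → ℝ} {a b : ℝ} (hf : ConvexOn ℝ (Icc a b) f)
    (hab : a ≤ b) : IntervalIntegrable f volume a b := by
  have ha : a ∈ Icc a b := left_mem_Icc.2 hab
  have hb : b ∈ Icc a b := right_mem_Icc.2 hab
  set M := max (f a) (f b)
  have hupper : ∀ t ∈ Icc a b, f t ≤ M := fun t ht =>
    hf.le_on_segment ha hb (Icc_subset_segment ht)
  -- `(a + b) / 2` is the midpoint of `t` and its reflection `a + b - t`.
  have hlower : ∀ t ∈ Icc a b, 2 * f ((a + b) / 2) - M ≤ f t := by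
    intro t ht
    have hrefl : a + b - t ∈ Icc a b := ⟨by linarith [ht.2], by linarith [ht.1]⟩
    have hmid := hf.2 ht hrefl (by norm_num : (0 : ℝ) ≤ 1 / 2) (by norm_num : (0 : ℝ) ≤ 1 / 2)
      (by norm_num)
    simp only [smul_eq_mul] at hmid
    rw [show 1 / 2 * t + 1 / 2 * (a + b - t) = (a + b) / 2 by ring] at hmid
    linarith [hupper _ hrefl]
  have hcont : ContinuousOn f (Ioo a b) := by
    simpa only [interior_Icc] using hf.continuousOn_interior
  rw [intervalIntegrable_iff_integrableOn_Ioo_of_le hab]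
  refine ⟨hcont.aestronglyMeasurable measurableSet_Ioo,
    .restrict_of_bounded (C := max |2 * f ((a + b) / 2) - M| |M|) measure_Ioo_lt_top
      (ae_restrict_of_forall_mem measurableSet_Ioo fun t ht => ?_)⟩
  have ht := Ioo_subset_Icc_self ht
  exact abs_le_max_abs_abs (hlower t ht) (hupper t ht)

theorem ConvexOn.comp_segment {E : Type*} [AddCommGroup E] [Module ℝ E] {s : Set E} {f : E → ℝ}
    (hf : ConvexOn ℝ s f) {x y : E} (hx : x ∈ s) (hy : y ∈ s) :
    ConvexOn ℝ (Icc 0 1) fun t : ℝ => f ((1 - t) • x + t • y) := by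
  have h := (hf.comp_affineMap (AffineMap.lineMap x y)).subset
    (fun _ ht => hf.1.lineMap_mem hx hy ht) (convex_Icc 0 1)
  simpa only [Function.comp_def, AffineMap.lineMap_apply_module] using h

section WeightFunction

variable {ι κ E : Type*} [Fintype κ] [AddCommGroup E] [Module ℝ E]

def weightedRow (lam : κ → ℝ) (x : κ → E) (ω : ι → κ → ℝ) (i : ι) : E :=
  ∑ j, (ω i j * lam j) • x j

theorem weightedRow_add_smul (lam : κ → ℝ) (x : κ → E) (ω ω' : ι → κ → ℝ) (a b : ℝ) (i : ι) :
    weightedRow lam x (a • ω + b • ω') i =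
      a • weightedRow lam x ω i + b • weightedRow lam x ω' i := by
  simp only [weightedRow, smul_sum, ← sum_add_distrib, smul_smul, ← add_smul, Pi.add_apply,
    Pi.smul_apply, smul_eq_mul, add_mul, mul_assoc]

variable [Fintype ι]

structure IsWeightFunction (μ : ι → ℝ) (lam : κ → ℝ) (ω : ι → κ → ℝ) : Prop where
  nonneg : ∀ i j, 0 ≤ ω i j
  sum_left_eq_one : ∀ j, ∑ i, ω i j * μ i = 1
  sum_right_eq_one : ∀ i, ∑ j, ω i j * lam j = 1

theorem convex_setOf_isWeightFunction (μ : ι → ℝ) (lam : κ → ℝ) :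
    Convex ℝ {ω | IsWeightFunction μ lam ω} := by
  intro ω hω ω' hω' a b ha hb hab
  refine ⟨fun i j => ?_, fun j => ?_, fun i => ?_⟩
  · exact add_nonneg (mul_nonneg ha (hω.nonneg i j)) (mul_nonneg hb (hω'.nonneg i j))
  · simp only [Pi.add_apply, Pi.smul_apply, smul_eq_mul, add_mul, mul_assoc, sum_add_distrib,
      ← mul_sum, hω.sum_left_eq_one, hω'.sum_left_eq_one, mul_one, hab]
  · simp only [Pi.add_apply, Pi.smul_apply, smul_eq_mul, add_mul, mul_assoc, sum_add_distrib,
      ← mul_sum, hω.sum_right_eq_one, hω'.sum_right_eq_one, mul_one, hab]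

theorem weightedRow_mem {C : Set E} (hC : Convex ℝ C) {μ : ι → ℝ} {lam : κ → ℝ}
    (hlam0 : ∀ j, 0 ≤ lam j) {ω : ι → κ → ℝ} (hω : IsWeightFunction μ lam ω) {x : κ → E}
    (hx : ∀ j, x j ∈ C) (i : ι) : weightedRow lam x ω i ∈ C :=
  hC.sum_mem (fun j _ => mul_nonneg (hω.nonneg i j) (hlam0 j)) (hω.sum_right_eq_one i)
    fun j _ => hx j

theorem sum_smul_weightedRow {μ : ι → ℝ} {lam : κ → ℝ} {ω : ι → κ → ℝ}
    (hω : ∀ j, ∑ i, ω i j * μ i = 1) (x : κ → E) :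
    ∑ i, μ i • weightedRow lam x ω i = ∑ j, lam j • x j := by
  simp only [weightedRow, smul_sum, smul_smul]
  rw [sum_comm]
  refine sum_congr rfl fun j _ => ?_
  rw [← sum_smul]
  congr 1
  calc ∑ i, μ i * (ω i j * lam j) = (∑ i, ω i j * μ i) * lam j := by
        rw [sum_mul]; exact sum_congr rfl fun i _ => by ring
    _ = lam j := by rw [hω j, one_mul]

variable {C : Set E} {φ : E → ℝ} {μ : ι → ℝ} {lam : κ → ℝ} {x : κ → E} {ω : ι → κ → ℝ}

theorem ConvexOn.map_sum_smul_le_sum_mul_map_weightedRow (hφ : ConvexOn ℝ C φ)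
    (hμ0 : ∀ i, 0 ≤ μ i) (hμ1 : ∑ i, μ i = 1) (hlam0 : ∀ j, 0 ≤ lam j)
    (hω : IsWeightFunction μ lam ω) (hx : ∀ j, x j ∈ C) :
    φ (∑ j, lam j • x j) ≤ ∑ i, μ i * φ (weightedRow lam x ω i) := by
  rw [← sum_smul_weightedRow hω.sum_left_eq_one]
  exact hφ.map_sum_le (fun i _ => hμ0 i) hμ1 fun i _ => weightedRow_mem hφ.1 hlam0 hω hx i

theorem ConvexOn.sum_mul_map_weightedRow_le (hφ : ConvexOn ℝ C φ) (hμ0 : ∀ i, 0 ≤ μ i)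
    (hlam0 : ∀ j, 0 ≤ lam j) (hω : IsWeightFunction μ lam ω) (hx : ∀ j, x j ∈ C) :
    ∑ i, μ i * φ (weightedRow lam x ω i) ≤ ∑ j, lam j * φ (x j) := by
  have hrow : ∀ i, φ (weightedRow lam x ω i) ≤ ∑ j, (ω i j * lam j) * φ (x j) := fun i =>
    hφ.map_sum_le (fun j _ => mul_nonneg (hω.nonneg i j) (hlam0 j)) (hω.sum_right_eq_one i)
      fun j _ => hx j
  calc ∑ i, μ i * φ (weightedRow lam x ω i)
      ≤ ∑ i, μ i * ∑ j, (ω i j * lam j) * φ (x j) :=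
        sum_le_sum fun i _ => mul_le_mul_of_nonneg_left (hrow i) (hμ0 i)
    _ = ∑ j, (∑ i, ω i j * μ i) * (lam j * φ (x j)) := by
        simp only [mul_sum, sum_mul]
        rw [sum_comm]
        exact sum_congr rfl fun j _ => sum_congr rfl fun i _ => by ring
    _ = ∑ j, lam j * φ (x j) := by simp only [hω.sum_left_eq_one, one_mul]

theorem ConvexOn.convexOn_sum_mul_weightedRow (hφ : ConvexOn ℝ C φ) (hμ0 : ∀ i, 0 ≤ μ i)
    (hlam0 : ∀ j, 0 ≤ lam j) (hx : ∀ j, x j ∈ C) :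
    ConvexOn ℝ {ω | IsWeightFunction μ lam ω} fun ω => ∑ i, μ i * φ (weightedRow lam x ω i) := by
  refine ⟨convex_setOf_isWeightFunction μ lam, fun ω hω ω' hω' a b ha hb hab => ?_⟩
  have hrow : ∀ i, φ (weightedRow lam x (a • ω + b • ω') i)
      ≤ a * φ (weightedRow lam x ω i) + b * φ (weightedRow lam x ω' i) := fun i => by
    rw [weightedRow_add_smul]
    exact hφ.2 (weightedRow_mem hφ.1 hlam0 hω hx i) (weightedRow_mem hφ.1 hlam0 hω' hx i) ha hb hab
  calc ∑ i, μ i * φ (weightedRow lam x (a • ω + b • ω') i)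
      ≤ ∑ i, μ i * (a * φ (weightedRow lam x ω i) + b * φ (weightedRow lam x ω' i)) :=
        sum_le_sum fun i _ => mul_le_mul_of_nonneg_left (hrow i) (hμ0 i)
    _ = a • ∑ i, μ i * φ (weightedRow lam x ω i) + b • ∑ i, μ i * φ (weightedRow lam x ω' i) := by
        simp only [smul_eq_mul, mul_sum, ← sum_add_distrib]
        exact sum_congr rfl fun i _ => by ring

end WeightFunction

theorem jensen_refinement_two_weights_integral_general
    {E : Type*} [AddCommGroup E] [Module ℝ E]
    {m n : ℕ} (μ : Fin m → ℝ) (lam : Fin n → ℝ)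
    (hμ0 : ∀ i, 0 ≤ μ i) (hμ1 : ∑ i, μ i = 1)
    (hlam0 : ∀ j, 0 ≤ lam j)
    (C : Set E) (x : Fin n → E) (hx : ∀ j, x j ∈ C)
    (φ : E → ℝ) (hφ : ConvexOn ℝ C φ)
    (ω₁ ω₂ : Fin m → Fin n → ℝ)
    (hω₁0 : ∀ i j, 0 ≤ ω₁ i j) (hω₁μ : ∀ j, ∑ i, ω₁ i j * μ i = 1)
    (hω₁lam : ∀ i, ∑ j, ω₁ i j * lam j = 1)
    (hω₂0 : ∀ i j, 0 ≤ ω₂ i j) (hω₂μ : ∀ j, ∑ i, ω₂ i j * μ i = 1)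
    (hω₂lam : ∀ i, ∑ j, ω₂ i j * lam j = 1) :
    φ (∑ j, lam j • x j) ≤
        (∫ t in (0:ℝ)..1,
          ∑ i, μ i * φ (∑ j, (((1 - t) * ω₁ i j + t * ω₂ i j) * lam j) • x j)) ∧
      (∫ t in (0:ℝ)..1,
          ∑ i, μ i * φ (∑ j, (((1 - t) * ω₁ i j + t * ω₂ i j) * lam j) • x j)) ≤
        ∑ j, lam j * φ (x j) := by
  have hω₁ : IsWeightFunction μ lam ω₁ := ⟨hω₁0, hω₁μ, hω₁lam⟩
  have hω₂ : IsWeightFunction μ lam ω₂ := ⟨hω₂0, hω₂μ, hω₂lam⟩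
  have hω : ∀ t ∈ Icc (0 : ℝ) 1, IsWeightFunction μ lam ((1 - t) • ω₁ + t • ω₂) := fun t ht =>
    convex_setOf_isWeightFunction μ lam hω₁ hω₂ (sub_nonneg.2 ht.2) ht.1 (sub_add_cancel 1 t)
  change φ _ ≤ ∫ t in (0 : ℝ)..1, ∑ i, μ i * φ (weightedRow lam x ((1 - t) • ω₁ + t • ω₂) i) ∧
    (∫ t in (0 : ℝ)..1, ∑ i, μ i * φ (weightedRow lam x ((1 - t) • ω₁ + t • ω₂) i)) ≤ _
  have hint : IntervalIntegrable
      (fun t : ℝ => ∑ i, μ i * φ (weightedRow lam x ((1 - t) • ω₁ + t • ω₂) i)) volume 0 1 :=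
    ((hφ.convexOn_sum_mul_weightedRow hμ0 hlam0 hx).comp_segment hω₁ hω₂).intervalIntegrable
      zero_le_one
  constructor
  · simpa using intervalIntegral.integral_mono_on zero_le_one intervalIntegrable_const hint
      fun t ht => hφ.map_sum_smul_le_sum_mul_map_weightedRow hμ0 hμ1 hlam0 (hω t ht) hx
  · simpa using intervalIntegral.integral_mono_on zero_le_one hint intervalIntegrable_const
      fun t ht => hφ.sum_mul_map_weightedRow_le hμ0 hlam0 (hω t ht) hx

/-- Integral refinement of discrete Jensen's inequality via two weight functions:
`φ(∑ λⱼ xⱼ) ≤ ∫₀¹ φ_{ω₁,ω₂}(t) dt ≤ ∑ λⱼ φ(xⱼ)`. -/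
theorem jensen_refinement_two_weights_integral
    {E : Type*} [AddCommGroup E] [Module ℝ E]
    {m n : ℕ} (μ : Fin m → ℝ) (lam : Fin n → ℝ)
    (hμ0 : ∀ i, 0 ≤ μ i) (hμ1 : ∑ i, μ i = 1)
    (hlam0 : ∀ j, 0 ≤ lam j) (hlam1 : ∑ j, lam j = 1)
    (C : Set E) (x : Fin n → E) (hx : ∀ j, x j ∈ C)
    (φ : E → ℝ) (hφ : ConvexOn ℝ C φ)
    (ω₁ ω₂ : Fin m → Fin n → ℝ)
    (hω₁0 : ∀ i j, 0 ≤ ω₁ i j) (hω₁μ : ∀ j, ∑ i, ω₁ i j * μ i = 1)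
    (hω₁lam : ∀ i, ∑ j, ω₁ i j * lam j = 1)
    (hω₂0 : ∀ i j, 0 ≤ ω₂ i j) (hω₂μ : ∀ j, ∑ i, ω₂ i j * μ i = 1)
    (hω₂lam : ∀ i, ∑ j, ω₂ i j * lam j = 1) :
    φ (∑ j, lam j • x j) ≤
        (∫ t in (0:ℝ)..1,
          ∑ i, μ i * φ (∑ j, (((1 - t) * ω₁ i j + t * ω₂ i j) * lam j) • x j)) ∧
      (∫ t in (0:ℝ)..1,
          ∑ i, μ i * φ (∑ j, (((1 - t) * ω₁ i j + t * ω₂ i j) * lam j) • x j)) ≤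
        ∑ j, lam j * φ (x j) :=
  jensen_refinement_two_weights_integral_general μ lam hμ0 hμ1 hlam0 C x hx φ hφ ω₁ ω₂ hω₁0 hω₁μ
    hω₁lam hω₂0 hω₂μ hω₂lam
end

section
/- Let μ = (μ₁,…,μ_m) and λ = (λ₁,…,λ_n) be probability vectors, C ⊆ ℝ an interval, x₁,…,xₙ ∈ C, φ : C → ℝ convex, and ω₁, ω₂ two weight functions with respect to μ and λ. Then φ(∑_{j=1}^n λⱼxⱼ) ≤ ∑_{i=1}^m μᵢ A(φ; ∑_{j=1}^n ω₁(i,j)λⱼxⱼ, ∑_{j=1}^n ω₂(i,j)λⱼxⱼ) ≤ ∑_{j=1}^n λⱼφ(xⱼ), where A(f;a,b) = (1/(b−a))∫_a^b f(x) dx for a ≠ b and A(f;a,a) = f(a). -/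
/-!
Put `A i = ∑ⱼ ω₁(i,j) λⱼ xⱼ` and `B i = ∑ⱼ ω₂(i,j) λⱼ xⱼ`. Since the columns of each weight
function sum to `1` against `μ`, both `∑ᵢ μᵢ A i` and `∑ᵢ μᵢ B i` equal `∑ⱼ λⱼ xⱼ`, and the same
exchange of summations works with `φ (xⱼ)` in place of `xⱼ`. The Hermite–Hadamard inequalities
`φ ((A + B) / 2) ≤ A(φ; A, B) ≤ (φ A + φ B) / 2` then sit between Jensen's inequality for `μ`
applied to the midpoints and Jensen's inequality for the rows `ω(i, ·) λ` applied to `φ A`, `φ B`.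
Both Hermite–Hadamard inequalities come from pairing `y` with its reflection `a + b - y`:
`2 φ ((a + b) / 2) ≤ φ y + φ (a + b - y) ≤ φ a + φ b`.
-/

open Finset MeasureTheory

/-- The arithmetic (integral) mean `A(f;a,b)` of a function `f` over the interval
with endpoints `a` and `b`, with `A(f;a,a) = f a`. -/
noncomputable def intMean (f : ℝ → ℝ) (a b : ℝ) : ℝ :=
  if a = b then f a else (b - a)⁻¹ * ∫ x in a..b, f x

open Set intervalIntegral

lemma intMean_comm (f : ℝ → ℝ) (a b : ℝ) : intMean f a b = intMean f b a := by
  unfold intMean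
  rcases eq_or_ne a b with rfl | h
  · rfl
  rw [if_neg h, if_neg h.symm, integral_symm a b, show a - b = -(b - a) by ring, inv_neg]
  ring

section HermiteHadamard

variable {φ : ℝ → ℝ} {a b y : ℝ}

lemma add_sub_mem_Icc (hy : y ∈ Icc a b) : a + b - y ∈ Icc a b :=
  ⟨by linarith [hy.2], by linarith [hy.1]⟩

lemma IntervalIntegrable.comp_add_sub (hφ : IntervalIntegrable φ volume a b) :
    IntervalIntegrable (fun y => φ (a + b - y)) volume a b := by
  simpa using (hφ.comp_sub_left (a + b)).symm

lemma intervalIntegral.integral_add_comp_add_sub (hφ : IntervalIntegrable φ volume a b) :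
    ∫ y in a..b, (φ y + φ (a + b - y)) = 2 * ∫ y in a..b, φ y := by
  rw [integral_add hφ hφ.comp_add_sub, integral_comp_sub_left φ (a + b)]
  simp only [add_sub_cancel_left, add_sub_cancel_right]
  ring

namespace ConvexOn

lemma two_mul_map_add_div_two_le (hφ : ConvexOn ℝ (Icc a b) φ) (hy : y ∈ Icc a b) :
    2 * φ ((a + b) / 2) ≤ φ y + φ (a + b - y) := by
  have h := hφ.2 hy (add_sub_mem_Icc hy) (by norm_num : (0 : ℝ) ≤ 1 / 2)
    (by norm_num : (0 : ℝ) ≤ 1 / 2) (by norm_num)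
  simp only [smul_eq_mul] at h
  rw [show 1 / 2 * y + 1 / 2 * (a + b - y) = (a + b) / 2 by ring] at h
  linarith

lemma map_add_map_add_sub_le (hφ : ConvexOn ℝ (Icc a b) φ) (hy : y ∈ Icc a b) :
    φ y + φ (a + b - y) ≤ φ a + φ b := by
  rcases (hy.1.trans hy.2).eq_or_lt with rfl | hab
  · obtain rfl : y = a := le_antisymm hy.2 hy.1
    simp
  have hba : b - a ≠ 0 := (sub_pos.2 hab).ne'
  set t := (b - y) / (b - a)
  have ht : 0 ≤ t := div_nonneg (sub_nonneg.2 hy.2) (sub_pos.2 hab).le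
  have ht' : 0 ≤ 1 - t := by
    rw [one_sub_div hba]
    exact div_nonneg (by linarith [hy.1]) (sub_pos.2 hab).le
  have ha := Set.left_mem_Icc.2 hab.le
  have hb := Set.right_mem_Icc.2 hab.le
  have h₁ := hφ.2 ha hb ht ht' (add_sub_cancel t 1)
  have h₂ := hφ.2 ha hb ht' ht (sub_add_cancel 1 t)
  simp only [smul_eq_mul] at h₁ h₂
  rw [show t * a + (1 - t) * b = y by simp only [t]; field_simp; ring] at h₁
  rw [show (1 - t) * a + t * b = a + b - y by simp only [t]; field_simp; ring] at h₂
  linarith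

lemma intervalIntegrable_s5 (hab : a ≤ b) (hφ : ConvexOn ℝ (Icc a b) φ) :
    IntervalIntegrable φ volume a b := by
  set M := max (φ a) (φ b)
  have hle : ∀ z ∈ Icc a b, φ z ≤ M := fun z hz =>
    hφ.le_on_segment (Set.left_mem_Icc.2 hab) (Set.right_mem_Icc.2 hab) (by rwa [segment_eq_Icc hab])
  have hcont : ContinuousOn φ (Ioo a b) := by
    simpa only [interior_Icc] using hφ.continuousOn_interior
  rw [intervalIntegrable_iff_integrableOn_Ioo_of_le hab]
  refine IntegrableOn.of_bound measure_Ioo_lt_top (hcont.aestronglyMeasurable measurableSet_Ioo)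
    (max |2 * φ ((a + b) / 2) - M| |M|) (ae_restrict_of_forall_mem measurableSet_Ioo fun y hy => ?_)
  have hy := Ioo_subset_Icc_self hy
  rw [Real.norm_eq_abs]
  refine abs_le_max_abs_abs ?_ (hle y hy)
  linarith [hφ.two_mul_map_add_div_two_le hy, hle _ (add_sub_mem_Icc hy)]

lemma mul_map_add_div_two_le_integral (hab : a ≤ b) (hφ : ConvexOn ℝ (Icc a b) φ) :
    (b - a) * φ ((a + b) / 2) ≤ ∫ y in a..b, φ y := by
  have hint := hφ.intervalIntegrable_s5 hab
  have h := integral_mono_on hab intervalIntegrable_const (hint.add hint.comp_add_sub)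
    fun y hy => hφ.two_mul_map_add_div_two_le hy
  rw [intervalIntegral.integral_const, smul_eq_mul, integral_add_comp_add_sub hint] at h
  linarith

lemma integral_le_mul_add_div_two (hab : a ≤ b) (hφ : ConvexOn ℝ (Icc a b) φ) :
    ∫ y in a..b, φ y ≤ (b - a) * ((φ a + φ b) / 2) := by
  have hint := hφ.intervalIntegrable_s5 hab
  have h := integral_mono_on hab (hint.add hint.comp_add_sub) intervalIntegrable_const
    fun y hy => hφ.map_add_map_add_sub_le hy
  rw [intervalIntegral.integral_const, smul_eq_mul, integral_add_comp_add_sub hint] at h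
  linarith

lemma map_add_div_two_le_intMean (hφ : ConvexOn ℝ (uIcc a b) φ) :
    φ ((a + b) / 2) ≤ intMean φ a b := by
  wlog hab : a ≤ b generalizing a b
  · rw [intMean_comm, add_comm]
    exact this (by rwa [Set.uIcc_comm]) (le_of_not_ge hab)
  rw [Set.uIcc_of_le hab] at hφ
  rcases hab.eq_or_lt with rfl | hab
  · simp [intMean]
  rw [intMean, if_neg hab.ne, inv_mul_eq_div, le_div_iff₀ (sub_pos.2 hab), mul_comm]
  exact hφ.mul_map_add_div_two_le_integral hab.le

lemma intMean_le_add_div_two (hφ : ConvexOn ℝ (uIcc a b) φ) :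
    intMean φ a b ≤ (φ a + φ b) / 2 := by
  wlog hab : a ≤ b generalizing a b
  · rw [intMean_comm, add_comm]
    exact this (by rwa [Set.uIcc_comm]) (le_of_not_ge hab)
  rw [Set.uIcc_of_le hab] at hφ
  rcases hab.eq_or_lt with rfl | hab
  · simp [intMean]
  rw [intMean, if_neg hab.ne, inv_mul_eq_div, div_le_iff₀ (sub_pos.2 hab), mul_comm]
  exact hφ.integral_le_mul_add_div_two hab.le

end ConvexOn

end HermiteHadamard

section WeightFunctions

variable {ι κ : Type*} [Fintype ι] [Fintype κ]

lemma Convex.add_div_two_mem {C : Set ℝ} (hC : Convex ℝ C) {u v : ℝ} (hu : u ∈ C) (hv : v ∈ C) :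
    (u + v) / 2 ∈ C := by
  simpa [midpoint_eq_smul_add, div_eq_inv_mul] using hC.midpoint_mem hu hv

lemma Convex.sum_mul_mem {C : Set ℝ} (hC : Convex ℝ C) {w x : κ → ℝ} (hw0 : ∀ j, 0 ≤ w j)
    (hw1 : ∑ j, w j = 1) (hx : ∀ j, x j ∈ C) : ∑ j, w j * x j ∈ C := by
  simpa only [smul_eq_mul] using hC.sum_mem (fun j _ => hw0 j) hw1 fun j _ => hx j

lemma ConvexOn.map_sum_mul_le {C : Set ℝ} {φ : ℝ → ℝ} (hφ : ConvexOn ℝ C φ) {w x : κ → ℝ}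
    (hw0 : ∀ j, 0 ≤ w j) (hw1 : ∑ j, w j = 1) (hx : ∀ j, x j ∈ C) :
    φ (∑ j, w j * x j) ≤ ∑ j, w j * φ (x j) := by
  simpa only [smul_eq_mul] using hφ.map_sum_le (fun j _ => hw0 j) hw1 fun j _ => hx j

lemma sum_mul_sum_weight_mul {μ : ι → ℝ} {lam : κ → ℝ} {ω : ι → κ → ℝ}
    (hω : ∀ j, ∑ i, ω i j * μ i = 1) (y : κ → ℝ) :
    ∑ i, μ i * ∑ j, ω i j * lam j * y j = ∑ j, lam j * y j := by
  calc ∑ i, μ i * ∑ j, ω i j * lam j * y j = ∑ j, (∑ i, ω i j * μ i) * (lam j * y j) := by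
        simp_rw [mul_sum, sum_mul]
        rw [sum_comm]
        congr! 2 with j _ i _
        ring
    _ = ∑ j, lam j * y j := by simp only [hω, one_mul]

lemma sum_mul_average_sum_weight_mul {μ : ι → ℝ} {lam : κ → ℝ} {ω₁ ω₂ : ι → κ → ℝ}
    (hω₁ : ∀ j, ∑ i, ω₁ i j * μ i = 1) (hω₂ : ∀ j, ∑ i, ω₂ i j * μ i = 1) (y : κ → ℝ) :
    ∑ i, μ i * ((∑ j, ω₁ i j * lam j * y j + ∑ j, ω₂ i j * lam j * y j) / 2) =
      ∑ j, lam j * y j := by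
  simp_rw [mul_div_assoc', mul_add]
  rw [← sum_div, sum_add_distrib, sum_mul_sum_weight_mul hω₁, sum_mul_sum_weight_mul hω₂, add_self_div_two]

end WeightFunctions

theorem jensen_refinement_two_weights_intMean_general
    {m n : ℕ} (μ : Fin m → ℝ) (lam : Fin n → ℝ)
    (hμ0 : ∀ i, 0 ≤ μ i) (hμ1 : ∑ i, μ i = 1)
    (hlam0 : ∀ j, 0 ≤ lam j)
    (C : Set ℝ) (hC : Convex ℝ C) (x : Fin n → ℝ) (hx : ∀ j, x j ∈ C)
    (φ : ℝ → ℝ) (hφ : ConvexOn ℝ C φ)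
    (ω₁ ω₂ : Fin m → Fin n → ℝ)
    (hω₁0 : ∀ i j, 0 ≤ ω₁ i j) (hω₁μ : ∀ j, ∑ i, ω₁ i j * μ i = 1)
    (hω₁lam : ∀ i, ∑ j, ω₁ i j * lam j = 1)
    (hω₂0 : ∀ i j, 0 ≤ ω₂ i j) (hω₂μ : ∀ j, ∑ i, ω₂ i j * μ i = 1)
    (hω₂lam : ∀ i, ∑ j, ω₂ i j * lam j = 1) :
    φ (∑ j, lam j * x j) ≤
        ∑ i, μ i * intMean φ (∑ j, ω₁ i j * lam j * x j) (∑ j, ω₂ i j * lam j * x j) ∧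
      ∑ i, μ i * intMean φ (∑ j, ω₁ i j * lam j * x j) (∑ j, ω₂ i j * lam j * x j) ≤
        ∑ j, lam j * φ (x j) := by
  set A : Fin m → ℝ := fun i => ∑ j, ω₁ i j * lam j * x j
  set B : Fin m → ℝ := fun i => ∑ j, ω₂ i j * lam j * x j
  have hw₁ i j : 0 ≤ ω₁ i j * lam j := mul_nonneg (hω₁0 i j) (hlam0 j)
  have hw₂ i j : 0 ≤ ω₂ i j * lam j := mul_nonneg (hω₂0 i j) (hlam0 j)
  have hA i : A i ∈ C := hC.sum_mul_mem (hw₁ i) (hω₁lam i) hx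
  have hB i : B i ∈ C := hC.sum_mul_mem (hw₂ i) (hω₂lam i) hx
  have hφAB i : ConvexOn ℝ (uIcc (A i) (B i)) φ :=
    hφ.subset (hC.ordConnected.uIcc_subset (hA i) (hB i)) (convex_uIcc _ _)
  constructor
  · calc φ (∑ j, lam j * x j) = φ (∑ i, μ i * ((A i + B i) / 2)) := by
          rw [sum_mul_average_sum_weight_mul hω₁μ hω₂μ]
      _ ≤ ∑ i, μ i * φ ((A i + B i) / 2) :=
          hφ.map_sum_mul_le hμ0 hμ1 fun i => hC.add_div_two_mem (hA i) (hB i)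
      _ ≤ ∑ i, μ i * intMean φ (A i) (B i) := sum_le_sum fun i _ =>
          mul_le_mul_of_nonneg_left (hφAB i).map_add_div_two_le_intMean (hμ0 i)
  · calc ∑ i, μ i * intMean φ (A i) (B i) ≤ ∑ i, μ i * ((φ (A i) + φ (B i)) / 2) :=
          sum_le_sum fun i _ =>
            mul_le_mul_of_nonneg_left (hφAB i).intMean_le_add_div_two (hμ0 i)
      _ ≤ ∑ i, μ i * ((∑ j, ω₁ i j * lam j * φ (x j) + ∑ j, ω₂ i j * lam j * φ (x j)) / 2) := by
          gcongr with i _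
          · exact hμ0 i
          · exact hφ.map_sum_mul_le (hw₁ i) (hω₁lam i) hx
          · exact hφ.map_sum_mul_le (hw₂ i) (hω₂lam i) hx
      _ = ∑ j, lam j * φ (x j) := sum_mul_average_sum_weight_mul hω₁μ hω₂μ _

/-- Hermite–Hadamard type refinement of discrete Jensen's inequality via two
weight functions, on an interval of `ℝ`. -/
theorem jensen_refinement_two_weights_intMean
    {m n : ℕ} (μ : Fin m → ℝ) (lam : Fin n → ℝ)
    (hμ0 : ∀ i, 0 ≤ μ i) (hμ1 : ∑ i, μ i = 1)
    (hlam0 : ∀ j, 0 ≤ lam j) (hlam1 : ∑ j, lam j = 1)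
    (C : Set ℝ) (hC : Convex ℝ C) (x : Fin n → ℝ) (hx : ∀ j, x j ∈ C)
    (φ : ℝ → ℝ) (hφ : ConvexOn ℝ C φ)
    (ω₁ ω₂ : Fin m → Fin n → ℝ)
    (hω₁0 : ∀ i j, 0 ≤ ω₁ i j) (hω₁μ : ∀ j, ∑ i, ω₁ i j * μ i = 1)
    (hω₁lam : ∀ i, ∑ j, ω₁ i j * lam j = 1)
    (hω₂0 : ∀ i j, 0 ≤ ω₂ i j) (hω₂μ : ∀ j, ∑ i, ω₂ i j * μ i = 1)
    (hω₂lam : ∀ i, ∑ j, ω₂ i j * lam j = 1) :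
    φ (∑ j, lam j * x j) ≤
        ∑ i, μ i * intMean φ (∑ j, ω₁ i j * lam j * x j) (∑ j, ω₂ i j * lam j * x j) ∧
      ∑ i, μ i * intMean φ (∑ j, ω₁ i j * lam j * x j) (∑ j, ω₂ i j * lam j * x j) ≤
        ∑ j, lam j * φ (x j) :=
  jensen_refinement_two_weights_intMean_general μ lam hμ0 hμ1 hlam0 C hC x hx φ hφ ω₁ ω₂ hω₁0 hω₁μ
    hω₁lam hω₂0 hω₂μ hω₂lam
end

section
/- Let μ = (μ₁,…,μ_m) and λ = (λ₁,…,λ_n) be probability vectors, C a convex subset of a real vector space, x₁,…,xₙ ∈ C, φ : C → ℝ convex, and ω₁, ω₂ two weight functions with respect to μ and λ. Let p₁,…,p_k ≥ 0 with P_k = ∑_{i=1}^k pᵢ > 0, and let t₁,…,t_k ∈ [0,1]. Then φ(∑_{j=1}^n λⱼxⱼ) ≤ φ_{ω₁,ω₂}((1/P_k)∑_{i=1}^k pᵢtᵢ) ≤ (1/P_k)∑_{i=1}^k pᵢ φ_{ω₁,ω₂}(tᵢ) ≤ ∑_{j=1}^n λⱼφ(xⱼ), where φ_{ω₁,ω₂}(t)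 = ∑_{i=1}^m μᵢ φ(∑_{j=1}^n [(1−t)ω₁(i,j)+tω₂(i,j)]λⱼxⱼ). -/
open Finset

/-- Discrete Hadamard-type refinement: for weights `p₁,…,p_k ≥ 0` with positive sum and
points `t₁,…,t_k ∈ [0,1]`,
`φ(∑λⱼxⱼ) ≤ φ_{ω₁,ω₂}((1/P_k)∑pᵢtᵢ) ≤ (1/P_k)∑pᵢφ_{ω₁,ω₂}(tᵢ) ≤ ∑λⱼφ(xⱼ)`. -/
theorem jensen_refinement_two_weights_discrete_hadamard
    {E : Type*} [AddCommGroup E] [Module ℝ E]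
    {m n : ℕ} (μ : Fin m → ℝ) (lam : Fin n → ℝ)
    (hμ0 : ∀ i, 0 ≤ μ i) (hμ1 : ∑ i, μ i = 1)
    (hlam0 : ∀ j, 0 ≤ lam j) (hlam1 : ∑ j, lam j = 1)
    (C : Set E) (x : Fin n → E) (hx : ∀ j, x j ∈ C)
    (φ : E → ℝ) (hφ : ConvexOn ℝ C φ)
    (ω₁ ω₂ : Fin m → Fin n → ℝ)
    (hω₁0 : ∀ i j, 0 ≤ ω₁ i j) (hω₁μ : ∀ j, ∑ i, ω₁ i j * μ i = 1)
    (hω₁lam : ∀ i, ∑ j, ω₁ i j * lam j = 1)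
    (hω₂0 : ∀ i j, 0 ≤ ω₂ i j) (hω₂μ : ∀ j, ∑ i, ω₂ i j * μ i = 1)
    (hω₂lam : ∀ i, ∑ j, ω₂ i j * lam j = 1)
    {k : ℕ} (p : Fin k → ℝ) (hp : ∀ i, 0 ≤ p i) (hP : 0 < ∑ i, p i)
    (t : Fin k → ℝ) (ht : ∀ i, t i ∈ Set.Icc (0 : ℝ) 1) :
    (φ (∑ j, lam j • x j) ≤
        (fun s : ℝ =>
          ∑ i, μ i * φ (∑ j, (((1 - s) * ω₁ i j + s * ω₂ i j) * lam j) • x j))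
          ((∑ i, p i)⁻¹ * ∑ i, p i * t i)) ∧
      ((fun s : ℝ =>
          ∑ i, μ i * φ (∑ j, (((1 - s) * ω₁ i j + s * ω₂ i j) * lam j) • x j))
          ((∑ i, p i)⁻¹ * ∑ i, p i * t i) ≤
        (∑ i, p i)⁻¹ * ∑ i, p i *
          (fun s : ℝ =>
            ∑ i', μ i' * φ (∑ j, (((1 - s) * ω₁ i' j + s * ω₂ i' j) * lam j) • x j)) (t i)) ∧
      (∑ i, p i)⁻¹ * (∑ i, p i *
          (fun s : ℝ =>
            ∑ i', μ i' * φ (∑ j, (((1 - s) * ω₁ i' j + s * ω₂ i' j) * lam j) • x j)) (t i)) ≤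
        ∑ j, lam j * φ (x j) := by
  have hC : Convex ℝ C := hφ.1
  have hwnn : ∀ s ∈ Set.Icc (0:ℝ) 1, ∀ i j, 0 ≤ ((1 - s) * ω₁ i j + s * ω₂ i j) * lam j := by
    intro s hs i j
    have h1 : (0:ℝ) ≤ 1 - s := by linarith [hs.2]
    have h2 : (0:ℝ) ≤ s := hs.1
    have := hω₁0 i j; have := hω₂0 i j; have := hlam0 j
    positivity
  have hwsum : ∀ s : ℝ, ∀ i, ∑ j, ((1 - s) * ω₁ i j + s * ω₂ i j) * lam j = 1 := by
    intro s i
    have e1 : ∀ j, ((1 - s) * ω₁ i j + s * ω₂ i j) * lam j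
        = (1 - s) * (ω₁ i j * lam j) + s * (ω₂ i j * lam j) := fun j => by ring
    simp_rw [e1, Finset.sum_add_distrib, ← Finset.mul_sum, hω₁lam i, hω₂lam i]
    ring
  have hcol : ∀ s : ℝ, ∀ j, ∑ i, μ i * (((1 - s) * ω₁ i j + s * ω₂ i j) * lam j) = lam j := by
    intro s j
    have e1 : ∀ i, μ i * (((1 - s) * ω₁ i j + s * ω₂ i j) * lam j)
        = lam j * ((1 - s) * (ω₁ i j * μ i)) + lam j * (s * (ω₂ i j * μ i)) := fun i => by ring
    simp_rw [e1, Finset.sum_add_distrib, ← Finset.mul_sum, hω₁μ j, hω₂μ j]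
    ring
  have hmemC : ∀ s ∈ Set.Icc (0:ℝ) 1, ∀ i,
      (∑ j, (((1 - s) * ω₁ i j + s * ω₂ i j) * lam j) • x j) ∈ C := by
    intro s hs i
    exact hC.sum_mem (fun j _ => hwnn s hs i j) (hwsum s i) (fun j _ => hx j)
  -- lower bound
  have key1 : ∀ s ∈ Set.Icc (0:ℝ) 1, φ (∑ j, lam j • x j) ≤
      ∑ i, μ i * φ (∑ j, (((1 - s) * ω₁ i j + s * ω₂ i j) * lam j) • x j) := by
    intro s hs
    have hsum : ∑ i, μ i • (∑ j, (((1 - s) * ω₁ i j + s * ω₂ i j) * lam j) • x j)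
        = ∑ j, lam j • x j := by
      simp_rw [Finset.smul_sum, smul_smul]
      rw [Finset.sum_comm]
      refine Finset.sum_congr rfl fun j _ => ?_
      rw [← Finset.sum_smul, hcol s j]
    have h := hφ.map_sum_le (fun i _ => hμ0 i) hμ1 (fun i _ => hmemC s hs i)
    rw [hsum] at h
    simp only [smul_eq_mul] at h
    exact h
  -- upper bound
  have key2 : ∀ s ∈ Set.Icc (0:ℝ) 1,
      ∑ i, μ i * φ (∑ j, (((1 - s) * ω₁ i j + s * ω₂ i j) * lam j) • x j) ≤
        ∑ j, lam j * φ (x j) := by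
    intro s hs
    calc ∑ i, μ i * φ (∑ j, (((1 - s) * ω₁ i j + s * ω₂ i j) * lam j) • x j)
        ≤ ∑ i, μ i * ∑ j, (((1 - s) * ω₁ i j + s * ω₂ i j) * lam j) * φ (x j) := by
          refine Finset.sum_le_sum fun i _ => mul_le_mul_of_nonneg_left ?_ (hμ0 i)
          have h := hφ.map_sum_le (fun j _ => hwnn s hs i j) (hwsum s i) (fun j _ => hx j)
          simp only [smul_eq_mul] at h
          exact h
      _ = ∑ j, lam j * φ (x j) := by
          simp_rw [Finset.mul_sum]
          rw [Finset.sum_comm]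
          refine Finset.sum_congr rfl fun j _ => ?_
          have e : ∑ i, μ i * ((((1 - s) * ω₁ i j + s * ω₂ i j) * lam j) * φ (x j))
              = (∑ i, μ i * (((1 - s) * ω₁ i j + s * ω₂ i j) * lam j)) * φ (x j) := by
            rw [Finset.sum_mul]; exact Finset.sum_congr rfl fun i _ => by ring
          rw [e, hcol s j]
  -- convexity of Φ
  have hconv : ConvexOn ℝ (Set.Icc (0:ℝ) 1)
      (fun s : ℝ => ∑ i, μ i * φ (∑ j, (((1 - s) * ω₁ i j + s * ω₂ i j) * lam j) • x j)) := by
    refine ⟨convex_Icc 0 1, ?_⟩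
    intro s hs s' hs' a b ha hb hab
    simp only [smul_eq_mul, Finset.mul_sum]
    rw [← Finset.sum_add_distrib]
    refine Finset.sum_le_sum fun i _ => ?_
    have hyeq : ∑ j, (((1 - (a * s + b * s')) * ω₁ i j + (a * s + b * s') * ω₂ i j) * lam j) • x j
        = a • ∑ j, (((1 - s) * ω₁ i j + s * ω₂ i j) * lam j) • x j
          + b • ∑ j, (((1 - s') * ω₁ i j + s' * ω₂ i j) * lam j) • x j := by
      rw [Finset.smul_sum, Finset.smul_sum, ← Finset.sum_add_distrib]
      refine Finset.sum_congr rfl fun j _ => ?_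
      rw [smul_smul, smul_smul, ← add_smul]
      congr 1
      linear_combination (-(ω₁ i j * lam j)) * hab
    rw [hyeq]
    have h := hφ.2 (hmemC s hs i) (hmemC s' hs' i) ha hb hab
    simp only [smul_eq_mul] at h
    calc μ i * φ (a • ∑ j, (((1 - s) * ω₁ i j + s * ω₂ i j) * lam j) • x j
            + b • ∑ j, (((1 - s') * ω₁ i j + s' * ω₂ i j) * lam j) • x j)
        ≤ μ i * (a * φ (∑ j, (((1 - s) * ω₁ i j + s * ω₂ i j) * lam j) • x j)
            + b * φ (∑ j, (((1 - s') * ω₁ i j + s' * ω₂ i j) * lam j) • x j)) :=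
          mul_le_mul_of_nonneg_left h (hμ0 i)
      _ = a * (μ i * φ (∑ j, (((1 - s) * ω₁ i j + s * ω₂ i j) * lam j) • x j))
            + b * (μ i * φ (∑ j, (((1 - s') * ω₁ i j + s' * ω₂ i j) * lam j) • x j)) := by ring
  have hPne : (∑ i, p i) ≠ 0 := hP.ne'
  have hsbar : (∑ i, p i)⁻¹ * ∑ i, p i * t i ∈ Set.Icc (0:ℝ) 1 := by
    constructor
    · exact mul_nonneg (inv_nonneg.mpr hP.le)
        (Finset.sum_nonneg fun i _ => mul_nonneg (hp i) (ht i).1)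
    · rw [inv_mul_le_iff₀ hP, mul_one]
      exact Finset.sum_le_sum fun i _ => mul_le_of_le_one_right (hp i) (ht i).2
  refine ⟨key1 _ hsbar, ?_, ?_⟩
  · -- Jensen for Φ
    have hw0 : ∀ i ∈ Finset.univ, 0 ≤ (∑ i', p i')⁻¹ * p i :=
      fun i _ => mul_nonneg (inv_nonneg.mpr hP.le) (hp i)
    have hw1 : ∑ i, (∑ i', p i')⁻¹ * p i = 1 := by
      rw [← Finset.mul_sum, inv_mul_cancel₀ hPne]
    have h := hconv.map_sum_le hw0 hw1 (fun i _ => ht i)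
    simp only [smul_eq_mul] at h
    have e1 : (∑ i, p i)⁻¹ * ∑ i, p i * t i = ∑ i, (∑ i', p i')⁻¹ * p i * t i := by
      rw [Finset.mul_sum]; exact Finset.sum_congr rfl fun i _ => by ring
    have e2 : (∑ i, p i)⁻¹ * (∑ i, p i *
        (fun s : ℝ =>
          ∑ i', μ i' * φ (∑ j, (((1 - s) * ω₁ i' j + s * ω₂ i' j) * lam j) • x j)) (t i))
        = ∑ i, (∑ i', p i')⁻¹ * p i *
        (fun s : ℝ =>
          ∑ i', μ i' * φ (∑ j, (((1 - s) * ω₁ i' j + s * ω₂ i' j) * lam j) • x j)) (t i) := by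
      rw [Finset.mul_sum]; exact Finset.sum_congr rfl fun i _ => by ring
    rw [e1, e2]
    exact h
  · -- average is below the upper bound
    have hub : ∀ i : Fin k, (fun s : ℝ =>
        ∑ i', μ i' * φ (∑ j, (((1 - s) * ω₁ i' j + s * ω₂ i' j) * lam j) • x j)) (t i)
        ≤ ∑ j, lam j * φ (x j) := fun i => key2 (t i) (ht i)
    calc (∑ i, p i)⁻¹ * (∑ i, p i *
          (fun s : ℝ =>
            ∑ i', μ i' * φ (∑ j, (((1 - s) * ω₁ i' j + s * ω₂ i' j) * lam j) • x j)) (t i))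
        ≤ (∑ i, p i)⁻¹ * (∑ i, p i * ∑ j, lam j * φ (x j)) := by
          refine mul_le_mul_of_nonneg_left ?_ (inv_nonneg.mpr hP.le)
          exact Finset.sum_le_sum fun i _ => mul_le_mul_of_nonneg_left (hub i) (hp i)
      _ = ∑ j, lam j * φ (x j) := by
          rw [← Finset.sum_mul, ← mul_assoc, inv_mul_cancel₀ hPne, one_mul]
end

section
/- Let C be a convex subset of a real vector space, x₁,…,xₙ ∈ C, φ : C → ℝ convex, and B = [b_{ij}], C' = [c_{ij}] two n×n doubly stochastic matrices. Then for every t ∈ [0,1], φ((x₁+⋯+xₙ)/n) ≤ φ_{B,C'}(t) ≤ (φ(x₁)+⋯+φ(xₙ))/n, where φ_{B,C'}(t) = (1/n)∑_{i=1}^n φ(∑_{j=1}^n [(1−t)b_{ij}+tc_{ij}]xⱼ). -/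
open Finset

/-- Refinement of Jensen's inequality with equal weights via two doubly
stochastic matrices: for every `t ∈ [0,1]`,
`φ((x₁+⋯+xₙ)/n) ≤ φ_{B,C'}(t) ≤ (φ(x₁)+⋯+φ(xₙ))/n`. -/
theorem jensen_refinement_two_doubly_stochastic
    {E : Type*} [AddCommGroup E] [Module ℝ E]
    {n : ℕ} (hn : 0 < n)
    (C : Set E) (x : Fin n → E) (hx : ∀ j, x j ∈ C)
    (φ : E → ℝ) (hφ : ConvexOn ℝ C φ)
    (b c : Fin n → Fin n → ℝ)
    (hb0 : ∀ i j, 0 ≤ b i j) (hbrow : ∀ i, ∑ j, b i j = 1) (hbcol : ∀ j, ∑ i, b i j = 1)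
    (hc0 : ∀ i j, 0 ≤ c i j) (hcrow : ∀ i, ∑ j, c i j = 1) (hccol : ∀ j, ∑ i, c i j = 1)
    (t : ℝ) (ht : t ∈ Set.Icc (0 : ℝ) 1) :
    φ ((n : ℝ)⁻¹ • ∑ j, x j) ≤
        (n : ℝ)⁻¹ * ∑ i, φ (∑ j, ((1 - t) * b i j + t * c i j) • x j) ∧
      (n : ℝ)⁻¹ * ∑ i, φ (∑ j, ((1 - t) * b i j + t * c i j) • x j) ≤
        (∑ j, φ (x j)) / n := by
  obtain ⟨ht0, ht1⟩ := ht
  set a : Fin n → Fin n → ℝ := fun i j => (1 - t) * b i j + t * c i j with ha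
  have ha0 : ∀ i j, 0 ≤ a i j := fun i j =>
    add_nonneg (mul_nonneg (by linarith) (hb0 i j)) (mul_nonneg ht0 (hc0 i j))
  have harow : ∀ i, ∑ j, a i j = 1 := by
    intro i
    simp only [ha, Finset.sum_add_distrib, ← Finset.mul_sum, hbrow i, hcrow i]
    ring
  have hacol : ∀ j, ∑ i, a i j = 1 := by
    intro j
    simp only [ha, Finset.sum_add_distrib, ← Finset.mul_sum, hbcol j, hccol j]
    ring
  set y : Fin n → E := fun i => ∑ j, a i j • x j with hy
  have hyC : ∀ i, y i ∈ C := fun i =>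
    hφ.1.sum_mem (fun j _ => ha0 i j) (harow i) (fun j _ => hx j)
  have hn' : (0:ℝ) < n := by exact_mod_cast hn
  have hw : ∑ _i : Fin n, (n:ℝ)⁻¹ = 1 := by
    simp [Finset.card_fin]
    field_simp
  constructor
  · have key : φ (∑ i, (n:ℝ)⁻¹ • y i) ≤ ∑ i, (n:ℝ)⁻¹ * φ (y i) :=
      hφ.map_sum_le (fun i _ => by positivity) hw (fun i _ => hyC i)
    have h1 : ∑ i, (n:ℝ)⁻¹ • y i = (n:ℝ)⁻¹ • ∑ j, x j := by
      rw [← Finset.smul_sum]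
      congr 1
      rw [hy]
      rw [Finset.sum_comm]
      refine Finset.sum_congr rfl fun j _ => ?_
      rw [← Finset.sum_smul, hacol j, one_smul]
    rw [h1] at key
    calc φ ((n:ℝ)⁻¹ • ∑ j, x j) ≤ ∑ i, (n:ℝ)⁻¹ * φ (y i) := key
      _ = (n:ℝ)⁻¹ * ∑ i, φ (y i) := by rw [Finset.mul_sum]
  · have key : ∀ i, φ (y i) ≤ ∑ j, a i j * φ (x j) := fun i =>
      hφ.map_sum_le (fun j _ => ha0 i j) (harow i) (fun j _ => hx j)
    have hsum : ∑ i, φ (y i) ≤ ∑ j, φ (x j) := by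
      calc ∑ i, φ (y i) ≤ ∑ i, ∑ j, a i j * φ (x j) :=
            Finset.sum_le_sum fun i _ => key i
        _ = ∑ j, (∑ i, a i j) * φ (x j) := by
            rw [Finset.sum_comm]
            exact Finset.sum_congr rfl fun j _ => (Finset.sum_mul ..).symm
        _ = ∑ j, φ (x j) := by
            refine Finset.sum_congr rfl fun j _ => ?_
            rw [hacol j, one_mul]
    rw [div_eq_inv_mul]
    exact mul_le_mul_of_nonneg_left hsum (by positivity)
end

section
/- Let C be a convex subset of a real vector space, x₁,…,xₙ ∈ C, φ : C → ℝ convex, and B = [b_{ij}], C' = [c_{ij}] two n×n doubly stochastic matrices. Then φ((x₁+⋯+xₙ)/n) ≤ ∫₀¹ φ_{B,C'}(t) dt ≤ (φ(x₁)+⋯+φ(xₙ))/n, where φ_{B,C'}(t) = (1/n)∑_{i=1}^n φ(∑_{j=1}^n [(1−t)b_{ij}+tc_{ij}]xⱼ). -/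
open Finset MeasureTheory

/-- A finite sum of convex functions is convex. -/
lemma convexOn_finset_sum {E : Type*} [AddCommGroup E] [Module ℝ E]
    {ι : Type*} (s : Finset ι) {t : Set E} (ht : Convex ℝ t) {f : ι → E → ℝ}
    (hf : ∀ i ∈ s, ConvexOn ℝ t (f i)) :
    ConvexOn ℝ t (fun x => ∑ i ∈ s, f i x) := by
  classical
  induction s using Finset.induction_on with
  | empty => simpa using convexOn_const 0 ht
  | @insert a s' hnot ih =>
    simp only [Finset.sum_insert hnot]
    exact (hf a (Finset.mem_insert_self a s')).add
      (ih fun i hi => hf i (Finset.mem_insert_of_mem hi))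

/-- A convex bounded function on `[0,1]` is interval integrable. -/
lemma convexOn_Icc_intervalIntegrable {g : ℝ → ℝ} (hg : ConvexOn ℝ (Set.Icc (0:ℝ) 1) g)
    {m M : ℝ} (hm : ∀ t ∈ Set.Icc (0:ℝ) 1, m ≤ g t) (hM : ∀ t ∈ Set.Icc (0:ℝ) 1, g t ≤ M) :
    IntervalIntegrable g volume 0 1 := by
  have hcont : ContinuousOn g (Set.Ioo (0:ℝ) 1) := by
    have := hg.continuousOn_interior
    rwa [interior_Icc] at this
  have hmeas : AEStronglyMeasurable g (volume.restrict (Set.Ioo (0:ℝ) 1)) :=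
    hcont.aestronglyMeasurable measurableSet_Ioo
  have hbound : IntegrableOn g (Set.Ioo (0:ℝ) 1) volume := by
    refine ⟨hmeas, HasFiniteIntegral.restrict_of_bounded (C := |m| + |M|)
      (by simp [Real.volume_Ioo]) ?_⟩
    filter_upwards [ae_restrict_mem measurableSet_Ioo] with t ht
    have ht' : t ∈ Set.Icc (0:ℝ) 1 := Set.Ioo_subset_Icc_self ht
    rw [Real.norm_eq_abs, abs_le]
    constructor
    · have := hm t ht'
      have := neg_abs_le m
      have := abs_nonneg M
      linarith
    · have := hM t ht'
      have := le_abs_self M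
      have := abs_nonneg m
      linarith
  have hIoc : IntegrableOn g (Set.Ioc (0:ℝ) 1) volume :=
    hbound.congr_set_ae Ioo_ae_eq_Ioc.symm
  rw [intervalIntegrable_iff_integrableOn_Ioc_of_le (by norm_num)]
  exact hIoc

/-- Integral refinement of Jensen's inequality with equal weights via two doubly
stochastic matrices: `φ((x₁+⋯+xₙ)/n) ≤ ∫₀¹ φ_{B,C'}(t) dt ≤ (φ(x₁)+⋯+φ(xₙ))/n`. -/
theorem jensen_refinement_two_doubly_stochastic_integral
    {E : Type*} [AddCommGroup E] [Module ℝ E]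
    {n : ℕ} (hn : 0 < n)
    (C : Set E) (x : Fin n → E) (hx : ∀ j, x j ∈ C)
    (φ : E → ℝ) (hφ : ConvexOn ℝ C φ)
    (b c : Fin n → Fin n → ℝ)
    (hb0 : ∀ i j, 0 ≤ b i j) (hbrow : ∀ i, ∑ j, b i j = 1) (hbcol : ∀ j, ∑ i, b i j = 1)
    (hc0 : ∀ i j, 0 ≤ c i j) (hcrow : ∀ i, ∑ j, c i j = 1) (hccol : ∀ j, ∑ i, c i j = 1) :
    φ ((n : ℝ)⁻¹ • ∑ j, x j) ≤
        (∫ t in (0:ℝ)..1, (n : ℝ)⁻¹ * ∑ i, φ (∑ j, ((1 - t) * b i j + t * c i j) • x j)) ∧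
      (∫ t in (0:ℝ)..1, (n : ℝ)⁻¹ * ∑ i, φ (∑ j, ((1 - t) * b i j + t * c i j) • x j)) ≤
        (∑ j, φ (x j)) / n := by
  have hnR : (0:ℝ) < n := by exact_mod_cast hn
  set g : ℝ → ℝ := fun t => (n : ℝ)⁻¹ * ∑ i, φ (∑ j, ((1 - t) * b i j + t * c i j) • x j)
    with hgdef
  -- weights nonneg for t ∈ [0,1]
  have hw0 : ∀ t ∈ Set.Icc (0:ℝ) 1, ∀ i j, 0 ≤ (1 - t) * b i j + t * c i j := by
    intro t ht i j
    have h1 := ht.1; have h2 := ht.2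
    nlinarith [hb0 i j, hc0 i j]
  have hwrow : ∀ (t : ℝ), ∀ i : Fin n, ∑ j, ((1 - t) * b i j + t * c i j) = 1 := by
    intro t i
    simp [Finset.sum_add_distrib, ← Finset.mul_sum, hbrow i, hcrow i]
  -- each point lies in C
  have hmem : ∀ t ∈ Set.Icc (0:ℝ) 1, ∀ i, (∑ j, ((1 - t) * b i j + t * c i j) • x j) ∈ C := by
    intro t ht i
    exact hφ.1.sum_mem (fun j _ => hw0 t ht i j) (hwrow t i) (fun j _ => hx j)
  -- pointwise lower bound
  have hlow : ∀ t ∈ Set.Icc (0:ℝ) 1, φ ((n : ℝ)⁻¹ • ∑ j, x j) ≤ g t := by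
    intro t ht
    have key : (∑ i : Fin n, (n : ℝ)⁻¹ • (∑ j, ((1 - t) * b i j + t * c i j) • x j))
        = (n : ℝ)⁻¹ • ∑ j, x j := by
      rw [← Finset.smul_sum]
      congr 1
      rw [Finset.sum_comm]
      refine Finset.sum_congr rfl fun j _ => ?_
      rw [← Finset.sum_smul]
      have hcol : ∑ i, ((1 - t) * b i j + t * c i j) = 1 := by
        simp [Finset.sum_add_distrib, ← Finset.mul_sum, hbcol j, hccol j]
      rw [hcol, one_smul]
    have hJ := hφ.map_sum_le (t := Finset.univ) (w := fun _ : Fin n => (n : ℝ)⁻¹)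
      (p := fun i => ∑ j, ((1 - t) * b i j + t * c i j) • x j)
      (fun i _ => by positivity) (by simp; field_simp)
      (fun i _ => hmem t ht i)
    rw [key] at hJ
    refine hJ.trans_eq ?_
    simp [hgdef, Finset.mul_sum]
  -- pointwise upper bound
  have hup : ∀ t ∈ Set.Icc (0:ℝ) 1, g t ≤ (∑ j, φ (x j)) / n := by
    intro t ht
    have hterm : ∀ i : Fin n, φ (∑ j, ((1 - t) * b i j + t * c i j) • x j)
        ≤ ∑ j, ((1 - t) * b i j + t * c i j) * φ (x j) := by
      intro i
      exact hφ.map_sum_le (fun j _ => hw0 t ht i j) (hwrow t i) (fun j _ => hx j)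
    have hsum : ∑ i, φ (∑ j, ((1 - t) * b i j + t * c i j) • x j) ≤ ∑ j, φ (x j) := by
      calc ∑ i, φ (∑ j, ((1 - t) * b i j + t * c i j) • x j)
          ≤ ∑ i, ∑ j, ((1 - t) * b i j + t * c i j) * φ (x j) :=
            Finset.sum_le_sum fun i _ => hterm i
        _ = ∑ j, (∑ i, ((1 - t) * b i j + t * c i j)) * φ (x j) := by
            rw [Finset.sum_comm]
            exact Finset.sum_congr rfl fun j _ => (Finset.sum_mul ..).symm
        _ = ∑ j, φ (x j) := by
            refine Finset.sum_congr rfl fun j _ => ?_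
            have hcol : ∑ i, ((1 - t) * b i j + t * c i j) = 1 := by
              simp [Finset.sum_add_distrib, ← Finset.mul_sum, hbcol j, hccol j]
            rw [hcol, one_mul]
    rw [hgdef, div_eq_inv_mul]
    exact mul_le_mul_of_nonneg_left hsum (by positivity)
  -- convexity of g on [0,1]
  have hgconv : ConvexOn ℝ (Set.Icc (0:ℝ) 1) g := by
    have hterm : ∀ i : Fin n, ConvexOn ℝ (Set.Icc (0:ℝ) 1)
        (fun t => φ (∑ j, ((1 - t) * b i j + t * c i j) • x j)) := by
      intro i
      set A : ℝ →ᵃ[ℝ] E := AffineMap.lineMap (∑ j, b i j • x j) (∑ j, c i j • x j) with hA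
      have heq : ∀ t : ℝ, (∑ j, ((1 - t) * b i j + t * c i j) • x j) = A t := by
        intro t
        rw [hA]
        simp only [AffineMap.lineMap_apply_module]
        rw [Finset.smul_sum, Finset.smul_sum, ← Finset.sum_add_distrib]
        refine Finset.sum_congr rfl fun j _ => ?_
        rw [smul_smul, smul_smul, ← add_smul]
      have hAconv : ConvexOn ℝ (A ⁻¹' C) (φ ∘ A) := hφ.comp_affineMap A
      have hsub : Set.Icc (0:ℝ) 1 ⊆ A ⁻¹' C := by
        intro t ht
        simp only [Set.mem_preimage]
        rw [← heq t]
        exact hmem t ht i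
      have hfin : (fun t : ℝ => φ (∑ j, ((1 - t) * b i j + t * c i j) • x j)) = φ ∘ A :=
        funext fun t => by simp only [heq t, Function.comp_apply]
      rw [hfin]
      exact hAconv.subset hsub (convex_Icc 0 1)
    have hsumconv := convexOn_finset_sum (Finset.univ : Finset (Fin n)) (convex_Icc (0:ℝ) 1)
      (fun i _ => hterm i)
    have := hsumconv.smul (c := (n : ℝ)⁻¹) (by positivity)
    simpa [hgdef, smul_eq_mul] using this
  -- integrability
  have hInt : IntervalIntegrable g volume 0 1 :=
    convexOn_Icc_intervalIntegrable hgconv hlow hup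
  constructor
  · have h := intervalIntegral.integral_mono_on (μ := volume) zero_le_one
      (intervalIntegrable_const (c := φ ((n : ℝ)⁻¹ • ∑ j, x j))) hInt hlow
    simpa [hgdef] using h
  · have h := intervalIntegral.integral_mono_on (μ := volume) zero_le_one
      hInt (intervalIntegrable_const (c := (∑ j, φ (x j)) / n)) hup
    simpa [hgdef] using h
end

section
/- Let x₁,…,xₙ be positive real numbers and B = [b_{ij}], C = [c_{ij}] two n×n doubly stochastic matrices. Then (x₁x₂⋯xₙ)^{1/n} ≤ (∏_{i=1}^n I(∑_{j=1}^n b_{ij}xⱼ, ∑_{j=1}^n c_{ij}xⱼ))^{1/n} ≤ (x₁+x₂+⋯+xₙ)/n, where I is the identric mean. -/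
/-!
On `[a, b]` the logarithm of the identric mean `I(a, b)` is the mean value of `log`, so the
Hermite–Hadamard inequalities for the concave `log` give `√(ab) ≤ I(a, b) ≤ (a + b) / 2`.
Applied row by row to `(Bx)ᵢ` and `(Cx)ᵢ`, the upper bound, AM–GM for the `I`'s and the
column sums of `B` and `C` give the right inequality. The lower bound reduces the left one to
`∏ xⱼ ≤ ∏ᵢ (Bx)ᵢ`, which is weighted AM–GM in each row of `B` combined with its column sums.
-/

open Finset

noncomputable def identric (a b : ℝ) : ℝ :=
  if a = b then a else (Real.exp 1)⁻¹ * (b ^ b / a ^ a) ^ (b - a)⁻¹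

open Real Set MeasureTheory intervalIntegral

section HermiteHadamard

variable {f : ℝ → ℝ} {a b : ℝ}

theorem IntervalIntegrable.comp_reflect (hf : IntervalIntegrable f volume a b) :
    IntervalIntegrable (fun t => f (a + b - t)) volume a b := by
  simpa using (hf.comp_sub_left (a + b)).symm

-- Both Hermite–Hadamard bounds come from pairing `t` with its reflection `a + b - t`.
theorem integral_add_comp_reflect (hf : IntervalIntegrable f volume a b) :
    ∫ t in a..b, (f t + f (a + b - t)) = 2 * ∫ t in a..b, f t := by
  rw [integral_add hf hf.comp_reflect, integral_comp_sub_left,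
    add_sub_cancel_right, add_sub_cancel_left, two_mul]

theorem ConcaveOn.add_le_add_reflect (hf : ConcaveOn ℝ (Icc a b) f) {t : ℝ}
    (ht : t ∈ Icc a b) : f a + f b ≤ f t + f (a + b - t) := by
  have hab : a ≤ b := ht.1.trans ht.2
  obtain ⟨p, q, hp, hq, hpq, rfl⟩ := (segment_eq_Icc hab).symm ▸ ht
  have h₁ := hf.2 (left_mem_Icc.2 hab) (right_mem_Icc.2 hab) hp hq hpq
  have h₂ := hf.2 (left_mem_Icc.2 hab) (right_mem_Icc.2 hab) hq hp (by linarith)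
  have hreflect : a + b - (p • a + q • b) = q • a + p • b := by
    simp only [smul_eq_mul]; linear_combination (-(a + b)) * hpq
  rw [hreflect]
  simp only [smul_eq_mul] at h₁ h₂ ⊢
  have hsplit : f a + f b = (p + q) * (f a + f b) := by rw [hpq, one_mul]
  linarith

theorem ConcaveOn.add_reflect_le_two_mul_midpoint (hf : ConcaveOn ℝ (Icc a b) f) {t : ℝ}
    (ht : t ∈ Icc a b) : f t + f (a + b - t) ≤ 2 * f ((a + b) / 2) := by
  have ht' : a + b - t ∈ Icc a b := ⟨by linarith [ht.2], by linarith [ht.1]⟩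
  have h := hf.2 ht ht' (by norm_num : (0 : ℝ) ≤ 1 / 2) (by norm_num : (0 : ℝ) ≤ 1 / 2)
    (by norm_num)
  simp only [smul_eq_mul] at h
  rw [show 1 / 2 * t + 1 / 2 * (a + b - t) = (a + b) / 2 by ring] at h
  linarith

theorem ConcaveOn.trapezoid_le_integral (hab : a ≤ b) (hf : ConcaveOn ℝ (Icc a b) f)
    (hfi : IntervalIntegrable f volume a b) :
    (b - a) * ((f a + f b) / 2) ≤ ∫ t in a..b, f t := by
  have h := integral_mono_on hab intervalIntegrable_const
    (hfi.add hfi.comp_reflect) fun t ht => hf.add_le_add_reflect ht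
  rw [intervalIntegral.integral_const, integral_add_comp_reflect hfi, smul_eq_mul] at h
  linarith

theorem ConcaveOn.integral_le_midpoint (hab : a ≤ b) (hf : ConcaveOn ℝ (Icc a b) f)
    (hfi : IntervalIntegrable f volume a b) :
    ∫ t in a..b, f t ≤ (b - a) * f ((a + b) / 2) := by
  have h := integral_mono_on hab (hfi.add hfi.comp_reflect)
    intervalIntegrable_const fun t ht => hf.add_reflect_le_two_mul_midpoint ht
  rw [intervalIntegral.integral_const, integral_add_comp_reflect hfi, smul_eq_mul] at h
  linarith

end HermiteHadamard

section Identric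

variable {a b : ℝ}

theorem identric_self (a : ℝ) : identric a a = a := if_pos rfl

theorem identric_pos (ha : 0 < a) (hb : 0 < b) : 0 < identric a b := by
  unfold identric
  split_ifs
  · exact ha
  · have := rpow_pos_of_pos ha a
    have := rpow_pos_of_pos hb b
    positivity

theorem identric_comm (ha : 0 < a) (hb : 0 < b) : identric a b = identric b a := by
  rcases eq_or_ne a b with rfl | hab
  · rfl
  have haa := rpow_pos_of_pos ha a
  have hbb := rpow_pos_of_pos hb b
  rw [identric, identric, if_neg hab, if_neg hab.symm, ← inv_div, inv_rpow (by positivity),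
    ← rpow_neg (by positivity), neg_inv, neg_sub]

theorem log_identric (ha : 0 < a) (hb : 0 < b) (hab : a ≠ b) :
    log (identric a b) = (∫ t in a..b, log t) / (b - a) := by
  have haa := rpow_pos_of_pos ha a
  have hbb := rpow_pos_of_pos hb b
  rw [identric, if_neg hab, integral_log, log_mul (by positivity) (by positivity),
    log_rpow (by positivity), log_div hbb.ne' haa.ne', log_rpow hb, log_rpow ha, log_inv,
    log_exp]
  field_simp [sub_ne_zero.2 hab.symm]
  ring

theorem concaveOn_log_Icc (ha : 0 < a) : ConcaveOn ℝ (Icc a b) log :=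
  strictConcaveOn_log_Ioi.concaveOn.subset (fun _ ht => ha.trans_le ht.1) (convex_Icc a b)

theorem sqrt_mul_le_identric (ha : 0 < a) (hb : 0 < b) : √(a * b) ≤ identric a b := by
  wlog hab : a < b generalizing a b
  · rcases (not_lt.1 hab).eq_or_lt with rfl | hba
    · rw [identric_self, sqrt_mul_self ha.le]
    · rw [identric_comm ha hb, mul_comm]
      exact this hb ha hba
  rw [← log_le_log_iff (by positivity) (identric_pos ha hb), log_sqrt (by positivity),
    log_mul ha.ne' hb.ne', log_identric ha hb hab.ne, le_div_iff₀ (sub_pos.2 hab)]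
  linarith [(concaveOn_log_Icc ha).trapezoid_le_integral hab.le intervalIntegrable_log']

theorem identric_le_add_div_two (ha : 0 < a) (hb : 0 < b) : identric a b ≤ (a + b) / 2 := by
  wlog hab : a < b generalizing a b
  · rcases (not_lt.1 hab).eq_or_lt with rfl | hba
    · rw [identric_self, add_self_div_two]
    · rw [identric_comm ha hb, add_comm]
      exact this hb ha hba
  rw [← log_le_log_iff (identric_pos ha hb) (by positivity), log_identric ha hb hab.ne,
    div_le_iff₀ (sub_pos.2 hab), mul_comm]
  exact (concaveOn_log_Icc ha).integral_le_midpoint hab.le intervalIntegrable_log'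

end Identric

section DoublyStochastic

variable {ι κ : Type*} [Fintype ι] [Fintype κ] {b : ι → κ → ℝ} {x : κ → ℝ}

theorem sum_mul_pos_of_sum_eq_one {w : κ → ℝ} (hw0 : ∀ j, 0 ≤ w j) (hw : ∑ j, w j = 1)
    (hx : ∀ j, 0 < x j) : 0 < ∑ j, w j * x j := by
  obtain ⟨j, -, hj⟩ := exists_ne_zero_of_sum_ne_zero (hw ▸ one_ne_zero : ∑ j, w j ≠ 0)
  exact sum_pos' (fun i _ => mul_nonneg (hw0 i) (hx i).le)
    ⟨j, mem_univ j, mul_pos ((hw0 j).lt_of_ne' hj) (hx j)⟩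

theorem sum_sum_mul_eq_sum (hcol : ∀ j, ∑ i, b i j = 1) : ∑ i, ∑ j, b i j * x j = ∑ j, x j := by
  rw [sum_comm]
  exact sum_congr rfl fun j _ => by rw [← sum_mul, hcol, one_mul]

theorem prod_le_prod_sum_mul (hb0 : ∀ i j, 0 ≤ b i j) (hrow : ∀ i, ∑ j, b i j = 1)
    (hcol : ∀ j, ∑ i, b i j = 1) (hx : ∀ j, 0 ≤ x j) :
    ∏ j, x j ≤ ∏ i, ∑ j, b i j * x j :=
  calc ∏ j, x j = ∏ j, ∏ i, x j ^ b i j := prod_congr rfl fun j _ => by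
        rw [← rpow_sum_of_nonneg (hx j) fun i _ => hb0 i j, hcol, rpow_one]
    _ = ∏ i, ∏ j, x j ^ b i j := prod_comm
    _ ≤ ∏ i, ∑ j, b i j * x j :=
        prod_le_prod (fun i _ => prod_nonneg fun j _ => rpow_nonneg (hx j) _) fun i _ =>
          geom_mean_le_arith_mean_weighted _ _ _ (fun j _ => hb0 i j) (hrow i) fun j _ => hx j

end DoublyStochastic

theorem prod_rpow_inv_card_le_sum_div_card {ι : Type*} (s : Finset ι) (hs : s.Nonempty)
    {z : ι → ℝ} (hz : ∀ i ∈ s, 0 ≤ z i) :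
    (∏ i ∈ s, z i) ^ ((#s : ℝ)⁻¹) ≤ (∑ i ∈ s, z i) / #s := by
  simpa using geom_mean_le_arith_mean s 1 z (fun _ _ => zero_le_one) (by simpa using hs) hz

/-- Refinement of the AM–GM inequality via two doubly stochastic matrices and the
identric mean. -/
theorem agm_refinement_identric_doubly_stochastic
    {n : ℕ} (hn : 0 < n)
    (x : Fin n → ℝ) (hx : ∀ j, 0 < x j)
    (b c : Fin n → Fin n → ℝ)
    (hb0 : ∀ i j, 0 ≤ b i j) (hbrow : ∀ i, ∑ j, b i j = 1) (hbcol : ∀ j, ∑ i, b i j = 1)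
    (hc0 : ∀ i j, 0 ≤ c i j) (hcrow : ∀ i, ∑ j, c i j = 1) (hccol : ∀ j, ∑ i, c i j = 1) :
    (∏ j, x j) ^ ((n : ℝ)⁻¹) ≤
        (∏ i, identric (∑ j, b i j * x j) (∑ j, c i j * x j)) ^ ((n : ℝ)⁻¹) ∧
      (∏ i, identric (∑ j, b i j * x j) (∑ j, c i j * x j)) ^ ((n : ℝ)⁻¹) ≤
        (∑ j, x j) / n := by
  have hB i : 0 < ∑ j, b i j * x j := sum_mul_pos_of_sum_eq_one (hb0 i) (hbrow i) hx
  have hC i : 0 < ∑ j, c i j * x j := sum_mul_pos_of_sum_eq_one (hc0 i) (hcrow i) hx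
  have hI i := identric_pos (hB i) (hC i)
  have hx0 : 0 ≤ ∏ j, x j := prod_nonneg fun j _ => (hx j).le
  constructor
  · refine rpow_le_rpow hx0 ((pow_le_pow_iff_left₀ hx0 (prod_nonneg fun i _ => (hI i).le)
      two_ne_zero).1 ?_) (by positivity)
    calc (∏ j, x j) ^ 2 = (∏ j, x j) * ∏ j, x j := sq _
      _ ≤ (∏ i, ∑ j, b i j * x j) * ∏ i, ∑ j, c i j * x j :=
          mul_le_mul (prod_le_prod_sum_mul hb0 hbrow hbcol fun j => (hx j).le)
            (prod_le_prod_sum_mul hc0 hcrow hccol fun j => (hx j).le) hx0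
            (prod_nonneg fun i _ => (hB i).le)
      _ = ∏ i, (∑ j, b i j * x j) * ∑ j, c i j * x j := prod_mul_distrib.symm
      _ ≤ ∏ i, identric (∑ j, b i j * x j) (∑ j, c i j * x j) ^ 2 :=
          prod_le_prod (fun i _ => (mul_pos (hB i) (hC i)).le) fun i _ =>
            (sqrt_le_left (hI i).le).1 (sqrt_mul_le_identric (hB i) (hC i))
      _ = _ := prod_pow _ _ _
  · calc _ ≤ (∑ i, identric (∑ j, b i j * x j) (∑ j, c i j * x j)) / n := by
          simpa using prod_rpow_inv_card_le_sum_div_card univ (univ_nonempty_iff.2 ⟨⟨0, hn⟩⟩)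
            fun i _ => (hI i).le
      _ ≤ (∑ i, ((∑ j, b i j * x j) + ∑ j, c i j * x j) / 2) / n := by
          gcongr with i
          exact identric_le_add_div_two (hB i) (hC i)
      _ = (∑ j, x j) / n := by
          rw [← sum_div, sum_add_distrib, sum_sum_mul_eq_sum hbcol, sum_sum_mul_eq_sum hccol,
            add_self_div_two]
end

section
/- Let (X,𝒜,ν) be a measure space, p ≥ 1, f₁,…,fₙ ∈ L^p(ν), let μ = (μ₁,…,μ_m) and λ = (λ₁,…,λ_n) be probability vectors, and let ω₁, ω₂ be two weight functions with respect to μ and λ. Then ‖∑_{j=1}^n λⱼfⱼ‖_p^p ≤ ∑_{i=1}^m μᵢ ‖L_p^p(∑_{j=1}^n ω₁(i,j)λⱼ|fⱼ|, ∑_{j=1}^n ω₂(i,j)λⱼ|fⱼ|)‖_1 ≤ ∑_{j=1}^n λⱼ‖fⱼ‖_p^p, where L_p^p(a,b) denotes the p-th power of the p-logarithmic mean applied pointwise and ‖·‖_1 is the L¹(ν)-norm. -/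
open Finset MeasureTheory

/-- The `p`-th power of the `p`-logarithmic mean:
`L_p^p(a,b) = (b^{p+1} - a^{p+1})/((p+1)(b-a))` for `a ≠ b`, and `a^p` for `a = b`. -/
noncomputable def LpPowP (p a b : ℝ) : ℝ :=
  if a = b then a ^ p else (b ^ (p + 1) - a ^ (p + 1)) / ((p + 1) * (b - a))

/-! `L_p^p(a, b) = ∫₀¹ ((1 - t) a + t b)^p dt` is the mean of the convex function `x ↦ x^p`
over the segment `[a, b]`, so by the Hermite–Hadamard inequality it lies between `((a + b)/2)^p`
and `(a^p + b^p)/2`. For the weighted sums `Aᵢ = ∑ⱼ ω₁(i,j) λⱼ |fⱼ|` and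
`Bᵢ = ∑ⱼ ω₂(i,j) λⱼ |fⱼ|`, the column conditions `∑ᵢ ω(i,j) μᵢ = 1` give
`∑ᵢ μᵢ (Aᵢ + Bᵢ)/2 = ∑ⱼ λⱼ |fⱼ|`, so Jensen's inequality for `μ` followed by the left
Hermite–Hadamard bound gives the lower estimate pointwise. For the upper one, the right bound and
Jensen's inequality for the rows `ω(i,·) λ` give `L_p^p(Aᵢ, Bᵢ) ≤ ∑ⱼ (ω₁ + ω₂)(i,j)/2 · λⱼ |fⱼ|^p`,
and the column conditions collapse the `μ`-average of the integrals to `∑ⱼ λⱼ ‖fⱼ‖_p^p`. -/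

section HermiteHadamard

open intervalIntegral

variable {s : Set ℝ} {φ : ℝ → ℝ} {a b : ℝ}

lemma Convex.mul_add_mul_mem {t : ℝ} (hs : Convex ℝ s) (ha : a ∈ s) (hb : b ∈ s)
    (ht : t ∈ Set.Icc (0 : ℝ) 1) : (1 - t) * a + t * b ∈ s :=
  hs ha hb (sub_nonneg.2 ht.2) ht.1 (sub_add_cancel 1 t)

lemma ContinuousOn.intervalIntegrable_comp_segment (hφ : ContinuousOn φ s) (hs : Convex ℝ s)
    (ha : a ∈ s) (hb : b ∈ s) :
    IntervalIntegrable (fun t => φ ((1 - t) * a + t * b)) volume 0 1 := by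
  refine ContinuousOn.intervalIntegrable ?_
  rw [Set.uIcc_of_le zero_le_one]
  exact hφ.comp (by fun_prop) fun t ht => hs.mul_add_mul_mem ha hb ht

theorem ConvexOn.map_add_div_two_le_integral (hφ : ConvexOn ℝ s φ) (hφc : ContinuousOn φ s)
    (ha : a ∈ s) (hb : b ∈ s) :
    φ ((a + b) / 2) ≤ ∫ t in (0 : ℝ)..1, φ ((1 - t) * a + t * b) := by
  set g := fun t : ℝ => φ ((1 - t) * a + t * b)
  have hg : IntervalIntegrable g volume 0 1 := hφc.intervalIntegrable_comp_segment hφ.1 ha hb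
  have hg' : IntervalIntegrable (fun t => g (1 - t)) volume 0 1 := by
    simpa using (hg.comp_sub_left 1).symm
  have hflip : ∫ t in (0 : ℝ)..1, g (1 - t) = ∫ t in (0 : ℝ)..1, g t := by
    simp only [integral_comp_sub_left g 1, sub_self, sub_zero]
  have hpt : ∀ t ∈ Set.Icc (0 : ℝ) 1, φ ((a + b) / 2) ≤ (g t + g (1 - t)) / 2 := by
    intro t ht
    have ht' : 1 - t ∈ Set.Icc (0 : ℝ) 1 := ⟨sub_nonneg.2 ht.2, by linarith [ht.1]⟩
    have := hφ.2 (hφ.1.mul_add_mul_mem ha hb ht) (hφ.1.mul_add_mul_mem ha hb ht')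
      (by norm_num : (0 : ℝ) ≤ 1 / 2) (by norm_num : (0 : ℝ) ≤ 1 / 2) (by norm_num)
    have hmid : (1 / 2 : ℝ) • ((1 - t) * a + t * b) +
        (1 / 2 : ℝ) • ((1 - (1 - t)) * a + (1 - t) * b) = (a + b) / 2 := by
      simp only [smul_eq_mul]; ring
    rw [hmid, smul_eq_mul, smul_eq_mul] at this
    show _ ≤ (φ _ + φ _) / 2
    linarith
  calc φ ((a + b) / 2) = ∫ _ in (0 : ℝ)..1, φ ((a + b) / 2) := by simp
    _ ≤ ∫ t in (0 : ℝ)..1, (g t + g (1 - t)) / 2 :=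
      integral_mono_on zero_le_one intervalIntegrable_const ((hg.add hg').div_const 2) hpt
    _ = ∫ t in (0 : ℝ)..1, g t := by
      rw [intervalIntegral.integral_div, integral_add hg hg', hflip]; ring

theorem ConvexOn.integral_le_add_div_two (hφ : ConvexOn ℝ s φ) (hφc : ContinuousOn φ s)
    (ha : a ∈ s) (hb : b ∈ s) :
    ∫ t in (0 : ℝ)..1, φ ((1 - t) * a + t * b) ≤ (φ a + φ b) / 2 := by
  calc _ ≤ ∫ t in (0 : ℝ)..1, ((1 - t) * φ a + t * φ b) :=
        integral_mono_on zero_le_one (hφc.intervalIntegrable_comp_segment hφ.1 ha hb)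
          (by apply Continuous.intervalIntegrable; fun_prop)
          fun t ht => hφ.2 ha hb (sub_nonneg.2 ht.2) ht.1 (sub_add_cancel 1 t)
    _ = (φ a + φ b) / 2 := by
      rw [intervalIntegral.integral_add (by apply Continuous.intervalIntegrable; fun_prop)
        (by apply Continuous.intervalIntegrable; fun_prop)]
      simp only [intervalIntegral.integral_mul_const, integral_comp_sub_left (fun t => t),
        sub_self, sub_zero, integral_id]
      ring

end HermiteHadamard

section LpPowP

open intervalIntegral

variable {p a b : ℝ}

theorem LpPowP_eq_integral (hp : -1 < p) :
    LpPowP p a b = ∫ t in (0 : ℝ)..1, ((1 - t) * a + t * b) ^ p := by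
  rcases eq_or_ne a b with rfl | hab
  · have hline : ∀ t : ℝ, (1 - t) * a + t * a = a := fun t => by ring
    simp [LpPowP, hline]
  · have hba : b - a ≠ 0 := sub_ne_zero.2 hab.symm
    have hline : ∀ t : ℝ, (1 - t) * a + t * b = (b - a) * t + a := fun t => by ring
    simp only [hline, integral_comp_mul_add (fun u => u ^ p) hba, mul_zero, zero_add, mul_one,
      sub_add_cancel, integral_rpow (Or.inl hp), LpPowP, if_neg hab, smul_eq_mul]
    field_simp

theorem LpPowP_nonneg (hp : -1 < p) (ha : 0 ≤ a) (hb : 0 ≤ b) : 0 ≤ LpPowP p a b := by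
  rw [LpPowP_eq_integral hp]
  exact integral_nonneg zero_le_one fun t ht =>
    Real.rpow_nonneg ((convex_Ici 0).mul_add_mul_mem ha hb ht) p

theorem add_div_two_rpow_le_LpPowP (hp : 1 ≤ p) (ha : 0 ≤ a) (hb : 0 ≤ b) :
    ((a + b) / 2) ^ p ≤ LpPowP p a b := by
  rw [LpPowP_eq_integral (by linarith)]
  exact (convexOn_rpow hp).map_add_div_two_le_integral
    (Real.continuous_rpow_const (by linarith)).continuousOn ha hb

theorem LpPowP_le_rpow_add_rpow_div_two (hp : 1 ≤ p) (ha : 0 ≤ a) (hb : 0 ≤ b) :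
    LpPowP p a b ≤ (a ^ p + b ^ p) / 2 := by
  rw [LpPowP_eq_integral (by linarith)]
  exact (convexOn_rpow hp).integral_le_add_div_two
    (Real.continuous_rpow_const (by linarith)).continuousOn ha hb

end LpPowP

theorem measurable_LpPowP (p : ℝ) : Measurable fun q : ℝ × ℝ => LpPowP p q.1 q.2 :=
  Measurable.ite (measurableSet_eq_fun measurable_fst measurable_snd) (by fun_prop) (by fun_prop)

theorem sum_mul_abs_nonneg {ι κ : Type*} [Fintype κ] {lam : κ → ℝ} {ω : ι → κ → ℝ}
    (hω : ∀ i j, 0 ≤ ω i j) (hlam0 : ∀ j, 0 ≤ lam j) (y : κ → ℝ) (i : ι) :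
    0 ≤ ∑ j, ω i j * lam j * |y j| :=
  sum_nonneg fun j _ => mul_nonneg (mul_nonneg (hω i j) (hlam0 j)) (abs_nonneg _)

section WeightedSums

variable {ι κ : Type*} [Fintype ι] [Fintype κ] {μ : ι → ℝ} {lam : κ → ℝ} {p : ℝ}

theorem sum_mul_sum_mul_eq_sum {ω : ι → κ → ℝ} (hω : ∀ j, ∑ i, ω i j * μ i = 1) (c : κ → ℝ) :
    ∑ i, μ i * ∑ j, ω i j * c j = ∑ j, c j := by
  calc ∑ i, μ i * ∑ j, ω i j * c j = ∑ j, (∑ i, ω i j * μ i) * c j := by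
        simp_rw [mul_sum, sum_mul]
        rw [sum_comm]
        exact sum_congr rfl fun _ _ => sum_congr rfl fun _ _ => by ring
    _ = ∑ j, c j := by simp only [hω, one_mul]

theorem rpow_sum_mul_add_div_two_le_sum_mul_LpPowP (hp : 1 ≤ p) {a b : ι → ℝ}
    (hμ0 : ∀ i, 0 ≤ μ i) (hμ1 : ∑ i, μ i = 1) (ha : ∀ i, 0 ≤ a i) (hb : ∀ i, 0 ≤ b i) :
    (∑ i, μ i * ((a i + b i) / 2)) ^ p ≤ ∑ i, μ i * LpPowP p (a i) (b i) :=
  (Real.rpow_arith_mean_le_arith_mean_rpow univ μ _ (fun i _ => hμ0 i) hμ1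
      (fun i _ => div_nonneg (add_nonneg (ha i) (hb i)) zero_le_two) hp).trans
    (sum_le_sum fun i _ =>
      mul_le_mul_of_nonneg_left (add_div_two_rpow_le_LpPowP hp (ha i) (hb i)) (hμ0 i))

theorem rpow_abs_sum_mul_le_sum_mul_LpPowP (hp : 1 ≤ p) (hμ0 : ∀ i, 0 ≤ μ i)
    (hμ1 : ∑ i, μ i = 1) (hlam0 : ∀ j, 0 ≤ lam j) {ω₁ ω₂ : ι → κ → ℝ}
    (hω₁0 : ∀ i j, 0 ≤ ω₁ i j) (hω₁μ : ∀ j, ∑ i, ω₁ i j * μ i = 1)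
    (hω₂0 : ∀ i j, 0 ≤ ω₂ i j) (hω₂μ : ∀ j, ∑ i, ω₂ i j * μ i = 1) (y : κ → ℝ) :
    |∑ j, lam j * y j| ^ p ≤
      ∑ i, μ i * LpPowP p (∑ j, ω₁ i j * lam j * |y j|) (∑ j, ω₂ i j * lam j * |y j|) := by
  have hcol : ∀ ω : ι → κ → ℝ, (∀ j, ∑ i, ω i j * μ i = 1) →
      ∑ i, μ i * ∑ j, ω i j * lam j * |y j| = ∑ j, lam j * |y j| := fun ω hω => by
    simp_rw [mul_assoc]
    exact sum_mul_sum_mul_eq_sum hω _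
  have hmid : ∑ i, μ i * ((∑ j, ω₁ i j * lam j * |y j| + ∑ j, ω₂ i j * lam j * |y j|) / 2) =
      ∑ j, lam j * |y j| := by
    calc _ = (∑ i, μ i * ∑ j, ω₁ i j * lam j * |y j| + ∑ i, μ i * ∑ j, ω₂ i j * lam j * |y j|)
          / 2 := by
          rw [← sum_add_distrib, sum_div]
          exact sum_congr rfl fun _ _ => by ring
      _ = _ := by rw [hcol ω₁ hω₁μ, hcol ω₂ hω₂μ]; ring
  calc |∑ j, lam j * y j| ^ p ≤ (∑ j, lam j * |y j|) ^ p := by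
        refine Real.rpow_le_rpow (abs_nonneg _) ((abs_sum_le_sum_abs _ _).trans_eq ?_) (by linarith)
        exact sum_congr rfl fun j _ => by rw [abs_mul, abs_of_nonneg (hlam0 j)]
    _ ≤ _ := hmid ▸ rpow_sum_mul_add_div_two_le_sum_mul_LpPowP hp hμ0 hμ1
        (sum_mul_abs_nonneg hω₁0 hlam0 y) (sum_mul_abs_nonneg hω₂0 hlam0 y)

theorem LpPowP_sum_mul_le_sum_mul_rpow (hp : 1 ≤ p) {w₁ w₂ y : κ → ℝ}
    (hw₁0 : ∀ j, 0 ≤ w₁ j) (hw₁1 : ∑ j, w₁ j = 1) (hw₂0 : ∀ j, 0 ≤ w₂ j) (hw₂1 : ∑ j, w₂ j = 1)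
    (hy : ∀ j, 0 ≤ y j) :
    LpPowP p (∑ j, w₁ j * y j) (∑ j, w₂ j * y j) ≤ ∑ j, (w₁ j + w₂ j) / 2 * y j ^ p := by
  have jensen : ∀ w : κ → ℝ, (∀ j, 0 ≤ w j) → ∑ j, w j = 1 →
      (∑ j, w j * y j) ^ p ≤ ∑ j, w j * y j ^ p := fun w hw0 hw1 =>
    Real.rpow_arith_mean_le_arith_mean_rpow univ w y (fun j _ => hw0 j) hw1 (fun j _ => hy j) hp
  calc _ ≤ ((∑ j, w₁ j * y j) ^ p + (∑ j, w₂ j * y j) ^ p) / 2 :=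
        LpPowP_le_rpow_add_rpow_div_two hp (sum_nonneg fun j _ => mul_nonneg (hw₁0 j) (hy j))
          (sum_nonneg fun j _ => mul_nonneg (hw₂0 j) (hy j))
    _ ≤ ((∑ j, w₁ j * y j ^ p) + ∑ j, w₂ j * y j ^ p) / 2 := by
        gcongr
        exacts [jensen w₁ hw₁0 hw₁1, jensen w₂ hw₂0 hw₂1]
    _ = ∑ j, (w₁ j + w₂ j) / 2 * y j ^ p := by
        rw [← sum_add_distrib, sum_div]
        exact sum_congr rfl fun j _ => by ring

end WeightedSums

section Integration

variable {X : Type*} [MeasurableSpace X] {ν : Measure X} {p : ℝ}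

theorem MeasureTheory.MemLp.integrable_abs_rpow {f : X → ℝ} (hp : 0 < p)
    (hf : MemLp f (ENNReal.ofReal p) ν) :
    Integrable (fun x => |f x| ^ p) ν := by
  simpa [Real.norm_eq_abs, ENNReal.toReal_ofReal hp.le] using
    hf.integrable_norm_rpow (by simpa using hp) ENNReal.ofReal_ne_top

theorem memLp_sum_mul_abs {κ : Type*} [Fintype κ] {q : ENNReal} (c : κ → ℝ) {f : κ → X → ℝ}
    (hf : ∀ j, MemLp (f j) q ν) : MemLp (fun x => ∑ j, c j * |f j x|) q ν :=
  memLp_finsetSum _ fun j _ => by simpa [Real.norm_eq_abs] using (hf j).norm.const_mul (c j)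

theorem MeasureTheory.MemLp.integrable_LpPowP (hp : 1 ≤ p) {g h : X → ℝ}
    (hg : MemLp g (ENNReal.ofReal p) ν) (hh : MemLp h (ENNReal.ofReal p) ν)
    (hg0 : ∀ x, 0 ≤ g x) (hh0 : ∀ x, 0 ≤ h x) :
    Integrable (fun x => LpPowP p (g x) (h x)) ν := by
  have hp0 : 0 < p := by linarith
  refine Integrable.mono'
    (((hg.integrable_abs_rpow hp0).add (hh.integrable_abs_rpow hp0)).div_const 2)
    ((measurable_LpPowP p).comp_aemeasurable
      (hg.1.aemeasurable.prodMk hh.1.aemeasurable)).aestronglyMeasurable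
    (ae_of_all _ fun x => ?_)
  show ‖LpPowP p (g x) (h x)‖ ≤ (|g x| ^ p + |h x| ^ p) / 2
  rw [Real.norm_eq_abs, abs_of_nonneg (LpPowP_nonneg (by linarith) (hg0 x) (hh0 x)),
    abs_of_nonneg (hg0 x), abs_of_nonneg (hh0 x)]
  exact LpPowP_le_rpow_add_rpow_div_two hp (hg0 x) (hh0 x)

variable {ι κ : Type*} [Fintype ι] [Fintype κ] {μ : ι → ℝ} {lam : κ → ℝ} {ω₁ ω₂ : ι → κ → ℝ}

theorem integral_rpow_abs_sum_mul_le_sum_mul_integral_LpPowP (hp : 1 ≤ p)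
    (hμ0 : ∀ i, 0 ≤ μ i) (hμ1 : ∑ i, μ i = 1) (hlam0 : ∀ j, 0 ≤ lam j)
    (hω₁0 : ∀ i j, 0 ≤ ω₁ i j) (hω₁μ : ∀ j, ∑ i, ω₁ i j * μ i = 1)
    (hω₂0 : ∀ i j, 0 ≤ ω₂ i j) (hω₂μ : ∀ j, ∑ i, ω₂ i j * μ i = 1) (f : κ → X → ℝ)
    (hL : ∀ i, Integrable
      (fun x => LpPowP p (∑ j, ω₁ i j * lam j * |f j x|) (∑ j, ω₂ i j * lam j * |f j x|)) ν) :
    ∫ x, |∑ j, lam j * f j x| ^ p ∂ν ≤ ∑ i, μ i *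
      ∫ x, LpPowP p (∑ j, ω₁ i j * lam j * |f j x|) (∑ j, ω₂ i j * lam j * |f j x|) ∂ν := by
  have hμL : ∀ i ∈ univ, Integrable (fun x => μ i *
      LpPowP p (∑ j, ω₁ i j * lam j * |f j x|) (∑ j, ω₂ i j * lam j * |f j x|)) ν :=
    fun i _ => (hL i).const_mul (μ i)
  calc _ ≤ ∫ x, ∑ i, μ i *
        LpPowP p (∑ j, ω₁ i j * lam j * |f j x|) (∑ j, ω₂ i j * lam j * |f j x|) ∂ν :=
        integral_mono_of_nonneg (ae_of_all _ fun x => by positivity) (integrable_finsetSum _ hμL)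
          (ae_of_all _ fun x => rpow_abs_sum_mul_le_sum_mul_LpPowP hp hμ0 hμ1 hlam0
            hω₁0 hω₁μ hω₂0 hω₂μ (f · x))
    _ = _ := by
        rw [integral_finsetSum _ hμL]
        simp_rw [integral_const_mul]

theorem sum_mul_integral_LpPowP_le_sum_mul_integral_rpow_abs (hp : 1 ≤ p)
    (hμ0 : ∀ i, 0 ≤ μ i) (hlam0 : ∀ j, 0 ≤ lam j)
    (hω₁0 : ∀ i j, 0 ≤ ω₁ i j) (hω₁μ : ∀ j, ∑ i, ω₁ i j * μ i = 1)
    (hω₁lam : ∀ i, ∑ j, ω₁ i j * lam j = 1)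
    (hω₂0 : ∀ i j, 0 ≤ ω₂ i j) (hω₂μ : ∀ j, ∑ i, ω₂ i j * μ i = 1)
    (hω₂lam : ∀ i, ∑ j, ω₂ i j * lam j = 1)
    {f : κ → X → ℝ} (hf : ∀ j, Integrable (fun x => |f j x| ^ p) ν) :
    ∑ i, μ i * ∫ x, LpPowP p (∑ j, ω₁ i j * lam j * |f j x|) (∑ j, ω₂ i j * lam j * |f j x|) ∂ν ≤
      ∑ j, lam j * ∫ x, |f j x| ^ p ∂ν := by
  set ω : ι → κ → ℝ := fun i j => (ω₁ i j + ω₂ i j) / 2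
  have hωμ : ∀ j, ∑ i, ω i j * μ i = 1 := fun j => by
    simp only [ω, add_div, add_mul, sum_add_distrib, div_mul_eq_mul_div, ← sum_div, hω₁μ, hω₂μ]
    norm_num
  have hrow : ∀ i, ∫ x, LpPowP p (∑ j, ω₁ i j * lam j * |f j x|) (∑ j, ω₂ i j * lam j * |f j x|) ∂ν
      ≤ ∑ j, ω i j * (lam j * ∫ x, |f j x| ^ p ∂ν) := fun i => by
    have hωf : ∀ j ∈ univ, Integrable (fun x => ω i j * lam j * |f j x| ^ p) ν :=
      fun j _ => (hf j).const_mul _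
    calc _ ≤ ∫ x, ∑ j, ω i j * lam j * |f j x| ^ p ∂ν :=
          integral_mono_of_nonneg
            (ae_of_all _ fun x => LpPowP_nonneg (by linarith) (sum_mul_abs_nonneg hω₁0 hlam0 _ i)
              (sum_mul_abs_nonneg hω₂0 hlam0 _ i))
            (integrable_finsetSum _ hωf)
            (ae_of_all _ fun x => (LpPowP_sum_mul_le_sum_mul_rpow hp
              (fun j => mul_nonneg (hω₁0 i j) (hlam0 j)) (hω₁lam i)
              (fun j => mul_nonneg (hω₂0 i j) (hlam0 j)) (hω₂lam i)
              (fun j => abs_nonneg (f j x))).trans_eq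
                (sum_congr rfl fun j _ => by simp only [ω]; ring))
      _ = _ := by
          rw [integral_finsetSum _ hωf]
          simp_rw [integral_const_mul, mul_assoc]
  calc _ ≤ ∑ i, μ i * ∑ j, ω i j * (lam j * ∫ x, |f j x| ^ p ∂ν) :=
        sum_le_sum fun i _ => mul_le_mul_of_nonneg_left (hrow i) (hμ0 i)
    _ = _ := sum_mul_sum_mul_eq_sum hωμ _

end Integration

theorem lp_norm_refinement_two_weights_general
    {X : Type*} [MeasurableSpace X] (ν : Measure X)
    (p : ℝ) (hp : 1 ≤ p)
    {m n : ℕ} (μ : Fin m → ℝ) (lam : Fin n → ℝ)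
    (hμ0 : ∀ i, 0 ≤ μ i) (hμ1 : ∑ i, μ i = 1)
    (hlam0 : ∀ j, 0 ≤ lam j)
    (ω₁ ω₂ : Fin m → Fin n → ℝ)
    (hω₁0 : ∀ i j, 0 ≤ ω₁ i j) (hω₁μ : ∀ j, ∑ i, ω₁ i j * μ i = 1)
    (hω₁lam : ∀ i, ∑ j, ω₁ i j * lam j = 1)
    (hω₂0 : ∀ i j, 0 ≤ ω₂ i j) (hω₂μ : ∀ j, ∑ i, ω₂ i j * μ i = 1)
    (hω₂lam : ∀ i, ∑ j, ω₂ i j * lam j = 1)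
    (f : Fin n → X → ℝ) (hf : ∀ j, MemLp (f j) (ENNReal.ofReal p) ν) :
    (∫ x, |∑ j, lam j * f j x| ^ p ∂ν) ≤
        ∑ i, μ i *
          ∫ x, |LpPowP p (∑ j, ω₁ i j * lam j * |f j x|) (∑ j, ω₂ i j * lam j * |f j x|)| ∂ν ∧
      (∑ i, μ i *
          ∫ x, |LpPowP p (∑ j, ω₁ i j * lam j * |f j x|) (∑ j, ω₂ i j * lam j * |f j x|)| ∂ν) ≤
        ∑ j, lam j * ∫ x, |f j x| ^ p ∂ν := by
  have habs : ∀ i x, |LpPowP p (∑ j, ω₁ i j * lam j * |f j x|) (∑ j, ω₂ i j * lam j * |f j x|)| =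
      LpPowP p (∑ j, ω₁ i j * lam j * |f j x|) (∑ j, ω₂ i j * lam j * |f j x|) := fun i x =>
    abs_of_nonneg (LpPowP_nonneg (by linarith) (sum_mul_abs_nonneg hω₁0 hlam0 _ i)
      (sum_mul_abs_nonneg hω₂0 hlam0 _ i))
  have hL : ∀ i, Integrable
      (fun x => LpPowP p (∑ j, ω₁ i j * lam j * |f j x|) (∑ j, ω₂ i j * lam j * |f j x|)) ν :=
    fun i => MemLp.integrable_LpPowP hp (memLp_sum_mul_abs _ hf) (memLp_sum_mul_abs _ hf)
      (fun x => sum_mul_abs_nonneg hω₁0 hlam0 (f · x) i)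
      (fun x => sum_mul_abs_nonneg hω₂0 hlam0 (f · x) i)
  simp only [habs]
  exact ⟨integral_rpow_abs_sum_mul_le_sum_mul_integral_LpPowP hp hμ0 hμ1 hlam0 hω₁0 hω₁μ hω₂0
      hω₂μ f hL,
    sum_mul_integral_LpPowP_le_sum_mul_integral_rpow_abs hp hμ0 hlam0 hω₁0 hω₁μ hω₁lam hω₂0
      hω₂μ hω₂lam fun j => (hf j).integrable_abs_rpow (by linarith)⟩

/-- Refinement of Jensen's inequality for the `p`-th power of the `L^p`-norm via two
weight functions: `‖∑λⱼfⱼ‖_p^p ≤ ∑ᵢμᵢ‖L_p^p(∑ⱼω₁(i,j)λⱼ|fⱼ|, ∑ⱼω₂(i,j)λⱼ|fⱼ|)‖₁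
≤ ∑ⱼλⱼ‖fⱼ‖_p^p`, where the norms are written as integrals. -/
theorem lp_norm_refinement_two_weights
    {X : Type*} [MeasurableSpace X] (ν : Measure X)
    (p : ℝ) (hp : 1 ≤ p)
    {m n : ℕ} (μ : Fin m → ℝ) (lam : Fin n → ℝ)
    (hμ0 : ∀ i, 0 ≤ μ i) (hμ1 : ∑ i, μ i = 1)
    (hlam0 : ∀ j, 0 ≤ lam j) (hlam1 : ∑ j, lam j = 1)
    (ω₁ ω₂ : Fin m → Fin n → ℝ)
    (hω₁0 : ∀ i j, 0 ≤ ω₁ i j) (hω₁μ : ∀ j, ∑ i, ω₁ i j * μ i = 1)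
    (hω₁lam : ∀ i, ∑ j, ω₁ i j * lam j = 1)
    (hω₂0 : ∀ i j, 0 ≤ ω₂ i j) (hω₂μ : ∀ j, ∑ i, ω₂ i j * μ i = 1)
    (hω₂lam : ∀ i, ∑ j, ω₂ i j * lam j = 1)
    (f : Fin n → X → ℝ) (hf : ∀ j, MemLp (f j) (ENNReal.ofReal p) ν) :
    (∫ x, |∑ j, lam j * f j x| ^ p ∂ν) ≤
        ∑ i, μ i *
          ∫ x, |LpPowP p (∑ j, ω₁ i j * lam j * |f j x|) (∑ j, ω₂ i j * lam j * |f j x|)| ∂ν ∧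
      (∑ i, μ i *
          ∫ x, |LpPowP p (∑ j, ω₁ i j * lam j * |f j x|) (∑ j, ω₂ i j * lam j * |f j x|)| ∂ν) ≤
        ∑ j, lam j * ∫ x, |f j x| ^ p ∂ν :=
  lp_norm_refinement_two_weights_general ν p hp μ lam hμ0 hμ1 hlam0 ω₁ ω₂ hω₁0 hω₁μ hω₁lam hω₂0 hω₂μ
    hω₂lam f hf
end
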